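/- arXiv:2107.11890 — 5 statements merged into one kernel-verified Lean document; each statement's English description precedes it below -/
import Mathlib

section
/- Let γ be a locally finite subset of ℝ^d, let ρ > 0, and for x ∈ γ let n_x be the number of points of γ in the closed Euclidean ball of radius ρ centred at x. Assume there is a constant 𝒩 ≥ 0 such that n_x ≤ 𝒩·log(1+|x|) for all x ∈ γ, where |·| is the Euclidean norm. Then for every 𝔞 > 0 the sequence (n_x)_{x∈γ} lies in l¹_𝔞, i.e. ∑_{x∈γ} e^{−𝔞|x|} n_x < ∞. -/
open Set Metric MeasureTheory
open scoped ENNReal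

/-! A ball of radius `ρ / 2` around `z` lies in the `ρ`-ball around each of its points of `γ`, so
by `log (1 + t) ≤ t` it contains at most `𝒩 (ρ / 2 + ‖z‖)` points of `γ`; equivalently, `z` lies in
at most that many of the balls `B(x, ρ / 2)`, `x ∈ γ`. Spreading `e^{-b‖x‖}` over these balls thus
bounds `vol B(0, ρ / 2) · ∑ₓ e^{-b‖x‖}` by `∫ 𝒩 (ρ / 2 + ‖z‖) e^{b (ρ / 2 - ‖z‖)} dz < ∞`.
Finally `nₓ e^{-𝔞‖x‖} ≤ 𝒩 ‖x‖ e^{-𝔞‖x‖} ≤ (2 𝒩 / 𝔞) e^{-𝔞‖x‖ / 2}`. -/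

theorem mul_exp_neg_mul_le_inv {c : ℝ} (hc : 0 < c) (t : ℝ) :
    t * Real.exp (-(c * t)) ≤ c⁻¹ := by
  have hexp : c * t ≤ Real.exp (c * t) := by linarith [Real.add_one_le_exp (c * t)]
  calc t * Real.exp (-(c * t)) = c⁻¹ * (c * t) * Real.exp (-(c * t)) := by field_simp
    _ ≤ c⁻¹ * Real.exp (c * t) * Real.exp (-(c * t)) := by gcongr
    _ = c⁻¹ := by rw [mul_assoc, ← Real.exp_add]; simp

theorem tsum_lintegral_le_lintegral_tsum {ι α : Type*} [MeasurableSpace α] {μ : Measure α}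
    {f : ι → α → ℝ≥0∞} (hf : ∀ i, AEMeasurable (f i) μ) :
    ∑' i, ∫⁻ a, f i a ∂μ ≤ ∫⁻ a, ∑' i, f i a ∂μ := by
  rw [ENNReal.tsum_eq_iSup_sum]
  refine iSup_le fun s => ?_
  rw [← lintegral_finsetSum' s fun i _ => hf i]
  exact lintegral_mono fun a => ENNReal.sum_le_tsum s

theorem tsum_indicator_closedBall_eq_encard {X : Type*} [PseudoMetricSpace X] (γ : Set X)
    (r : ℝ) (g : X → ℝ≥0∞) (z : X) :
    ∑' x : γ, (closedBall (x : X) r).indicator g z = (γ ∩ closedBall z r).encard * g z := by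
  rw [← ENNReal.tsum_set_const, tsum_subtype γ fun x => (closedBall x r).indicator g z,
    tsum_subtype (γ ∩ closedBall z r) fun _ => g z]
  congr 1
  ext x
  by_cases hx : x ∈ γ <;> by_cases hxz : dist z x ≤ r <;>
    simp [indicator, hx, hxz, mem_closedBall, dist_comm]

theorem ofReal_exp_neg_mul_norm_mul_measure_closedBall_le {E : Type*} [NormedAddCommGroup E]
    [MeasurableSpace E] [OpensMeasurableSpace E] (μ : Measure E) {b : ℝ} (hb : 0 ≤ b) (r : ℝ)
    (x : E) :
    ENNReal.ofReal (Real.exp (-b * ‖x‖)) * μ (closedBall x r)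
      ≤ ∫⁻ z in closedBall x r, ENNReal.ofReal (Real.exp (b * r - b * ‖z‖)) ∂μ := by
  rw [← setLIntegral_const]
  refine setLIntegral_mono' measurableSet_closedBall fun z hz => ?_
  have hzx : ‖z‖ ≤ ‖x‖ + r := by
    have := norm_le_norm_add_norm_sub' z x
    rw [mem_closedBall, dist_eq_norm] at hz
    linarith
  gcongr
  nlinarith

section HaarMeasure

variable {E : Type*} [NormedAddCommGroup E] [NormedSpace ℝ E] [FiniteDimensional ℝ E]
  [MeasurableSpace E] [BorelSpace E] (μ : Measure E) [μ.IsAddHaarMeasure]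

theorem integrable_norm_pow_mul_exp_neg_mul_norm (k : ℕ) {b : ℝ} (hb : 0 < b) :
    Integrable (fun z : E => ‖z‖ ^ k * Real.exp (-b * ‖z‖)) μ := by
  obtain _ | _ := subsingleton_or_nontrivial E
  · exact (integrable_const (‖(0 : E)‖ ^ k * Real.exp (-b * ‖(0 : E)‖))).congr
      (ae_of_all _ fun z => by rw [Subsingleton.elim z 0])
  · rw [integrable_fun_norm_addHaar μ (f := fun y => y ^ k * Real.exp (-b * y))]
    refine (integrableOn_rpow_mul_exp_neg_mul_rpow (s := (Module.finrank ℝ E - 1 + k : ℕ))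
      (neg_one_lt_zero.trans_le (Nat.cast_nonneg _)) one_pos hb).congr_fun (fun y _ => ?_)
      measurableSet_Ioi
    simp only [Real.rpow_natCast, Real.rpow_one, smul_eq_mul, pow_add, mul_assoc]

theorem integrable_affine_norm_mul_exp_sub_mul_norm (A B c : ℝ) {b : ℝ} (hb : 0 < b) :
    Integrable (fun z : E => (A + B * ‖z‖) * Real.exp (c - b * ‖z‖)) μ := by
  refine (((integrable_norm_pow_mul_exp_neg_mul_norm μ 0 hb).const_mul A).add
    ((integrable_norm_pow_mul_exp_neg_mul_norm μ 1 hb).const_mul B)).const_mul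
    (Real.exp c) |>.congr (ae_of_all _ fun z => ?_)
  simp only [Pi.add_apply, pow_zero, pow_one, sub_eq_add_neg, Real.exp_add]
  ring_nf

theorem summable_exp_neg_mul_norm_of_encard_inter_closedBall_le {γ : Set E} {r A B b : ℝ}
    (hr : 0 < r) (hb : 0 < b)
    (hγ : ∀ z, ((γ ∩ closedBall z r).encard : ℝ≥0∞) ≤ ENNReal.ofReal (A + B * ‖z‖)) :
    Summable fun x : γ => Real.exp (-b * ‖(x : E)‖) := by
  obtain ⟨μ, _⟩ : ∃ μ : Measure E, μ.IsAddHaarMeasure := ⟨Measure.addHaar, inferInstance⟩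
  set g : E → ℝ≥0∞ := fun z => ENNReal.ofReal (Real.exp (b * r - b * ‖z‖))
  have hg : Measurable g := by fun_prop
  have hweight : ∫⁻ z, ENNReal.ofReal (A + B * ‖z‖) * g z ∂μ < ∞ := by
    simpa only [g, ENNReal.ofReal_mul' (Real.exp_nonneg _)] using
      (integrable_affine_norm_mul_exp_sub_mul_norm μ A B (b * r) hb).lintegral_lt_top
  have hmass :
      (∑' x : γ, ENNReal.ofReal (Real.exp (-b * ‖(x : E)‖))) * μ (closedBall 0 r) < ∞ :=
    calc (∑' x : γ, ENNReal.ofReal (Real.exp (-b * ‖(x : E)‖))) * μ (closedBall 0 r)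
        = ∑' x : γ, ENNReal.ofReal (Real.exp (-b * ‖(x : E)‖)) * μ (closedBall (x : E) r) := by
          simp only [ENNReal.tsum_mul_right, Measure.addHaar_closedBall_center]
      _ ≤ ∑' x : γ, ∫⁻ z in closedBall (x : E) r, g z ∂μ :=
          ENNReal.tsum_le_tsum fun x =>
            ofReal_exp_neg_mul_norm_mul_measure_closedBall_le μ hb.le r x
      _ = ∑' x : γ, ∫⁻ z, (closedBall (x : E) r).indicator g z ∂μ := by
          simp only [lintegral_indicator measurableSet_closedBall]
      _ ≤ ∫⁻ z, ∑' x : γ, (closedBall (x : E) r).indicator g z ∂μ :=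
          tsum_lintegral_le_lintegral_tsum fun _ =>
            (hg.indicator measurableSet_closedBall).aemeasurable
      _ = ∫⁻ z, (γ ∩ closedBall z r).encard * g z ∂μ := by
          simp only [tsum_indicator_closedBall_eq_encard]
      _ ≤ ∫⁻ z, ENNReal.ofReal (A + B * ‖z‖) * g z ∂μ :=
          lintegral_mono fun z => by gcongr; exact hγ z
      _ < ∞ := hweight
  have hsum := ENNReal.lt_top_of_mul_ne_top_left hmass.ne (measure_closedBall_pos μ 0 hr).ne'
  simpa only [ENNReal.toReal_ofReal (Real.exp_nonneg _)] using ENNReal.summable_toReal hsum.ne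

end HaarMeasure

theorem encard_inter_closedBall_half_le {E : Type*} [NormedAddCommGroup E] {γ : Set E}
    {ρ C : ℝ} (hC : 0 ≤ C) (hfin : ∀ y ∈ γ, (γ ∩ closedBall y ρ).Finite)
    (hcount : ∀ y ∈ γ, ((γ ∩ closedBall y ρ).ncard : ℝ) ≤ C * ‖y‖) (z : E) :
    ((γ ∩ closedBall z (ρ / 2)).encard : ℝ≥0∞) ≤ ENNReal.ofReal (C * (ρ / 2) + C * ‖z‖) := by
  rcases (γ ∩ closedBall z (ρ / 2)).eq_empty_or_nonempty with hempty | ⟨y, hyγ, hyz⟩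
  · simp [hempty]
  rw [mem_closedBall, dist_eq_norm] at hyz
  have hsub : γ ∩ closedBall z (ρ / 2) ⊆ γ ∩ closedBall y ρ :=
    inter_subset_inter_right _ (closedBall_subset_closedBall' (by
      rw [dist_eq_norm, norm_sub_rev]; linarith))
  have hy : ‖y‖ ≤ ρ / 2 + ‖z‖ := by linarith [norm_le_norm_add_norm_sub' y z]
  calc ((γ ∩ closedBall z (ρ / 2)).encard : ℝ≥0∞) ≤ (γ ∩ closedBall y ρ).encard := by
        gcongr
    _ = ENNReal.ofReal ((γ ∩ closedBall y ρ).ncard : ℝ) := by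
        rw [← (hfin y hyγ).cast_ncard_eq, ENNReal.ofReal_natCast]; rfl
    _ ≤ ENNReal.ofReal (C * (ρ / 2) + C * ‖z‖) := by
        gcongr
        calc _ ≤ C * ‖y‖ := hcount y hyγ
          _ ≤ C * (ρ / 2 + ‖z‖) := by gcongr
          _ = _ := by ring

theorem statement0 (d : ℕ) (γ : Set (EuclideanSpace ℝ (Fin d)))
    (hloc : ∀ K : Set (EuclideanSpace ℝ (Fin d)), IsCompact K → (γ ∩ K).Finite)
    (ρ : ℝ) (hρ : 0 < ρ) (𝒩 : ℝ) (h𝒩 : 0 ≤ 𝒩)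
    (hn : ∀ x ∈ γ, ((γ ∩ closedBall x ρ).ncard : ℝ) ≤ 𝒩 * Real.log (1 + ‖x‖))
    (𝔞 : ℝ) (h𝔞 : 0 < 𝔞) :
    Summable (fun x : γ => Real.exp (-𝔞 * ‖(x : EuclideanSpace ℝ (Fin d))‖) *
      ((γ ∩ closedBall (x : EuclideanSpace ℝ (Fin d)) ρ).ncard : ℝ)) := by
  have hlinear : ∀ x ∈ γ, ((γ ∩ closedBall x ρ).ncard : ℝ) ≤ 𝒩 * ‖x‖ := fun x hx =>
    (hn x hx).trans (mul_le_mul_of_nonneg_left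
      (by linarith [Real.log_le_sub_one_of_pos (x := 1 + ‖x‖) (by positivity)]) h𝒩)
  have hsummable := summable_exp_neg_mul_norm_of_encard_inter_closedBall_le (half_pos hρ)
    (half_pos h𝔞) (encard_inter_closedBall_half_le h𝒩
      (fun y _ => hloc _ (isCompact_closedBall y ρ)) hlinear)
  refine Summable.of_nonneg_of_le (fun x => by positivity) (fun x => ?_)
    (hsummable.mul_left (𝒩 * (𝔞 / 2)⁻¹))
  set t := ‖(x : EuclideanSpace ℝ (Fin d))‖
  calc Real.exp (-𝔞 * t) * ((γ ∩ closedBall (x : EuclideanSpace ℝ (Fin d)) ρ).ncard : ℝ)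
      ≤ Real.exp (-𝔞 * t) * (𝒩 * t) := by gcongr; exact hlinear x x.2
    _ = 𝒩 * (t * Real.exp (-(𝔞 / 2 * t))) * Real.exp (-(𝔞 / 2) * t) := by
        rw [mul_assoc 𝒩, mul_assoc t, ← Real.exp_add]; ring_nf
    _ ≤ 𝒩 * (𝔞 / 2)⁻¹ * Real.exp (-(𝔞 / 2) * t) := by
        gcongr; exact mul_exp_neg_mul_le_inv (half_pos h𝔞) t
end

section
/- Let γ ⊂ ℝ^d be locally finite, ρ > 0, B_x = γ ∩ {y : |x−y| ≤ ρ}, n_x = #B_x, and assume n_x ≤ 𝒩·log(1+|x|) for all x ∈ γ and a constant 𝒩 ≥ 0. Let Q = (Q_{x,y})_{x,y∈γ} be a real matrix with Q_{x,y} = 0 whenever y ∉ B_x, and suppose there are C > 0 and q ≥ 1 with |Q_{x,y}| ≤ C·n_x^q for all x, y ∈ γ. Then there exists a constant L > 0, depending only on C, q, 𝒩, ρ and the interval [𝔞₋, 𝔞₊] ⊂ (0,∞), such that for all 𝔞₋ ≤ α < β ≤ 𝔞₊ and every z ∈ l¹_α, the sequence Qz defined by (Qz)_x = ∑_{y∈γ}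 Q_{x,y} z_y lies in l¹_β and ‖Qz‖_{l¹_β} ≤ L (β−α)^{−1/2} ‖z‖_{l¹_α}; that is, Q is an Ovsjannikov map of order 1/2 on the scale {l¹_𝔞}_{𝔞∈[𝔞₋,𝔞₊]}. -/
open Set Metric Real

/-! Bounding `|(Qz)ₓ|` by `∑ y, |Q x y| |z y|` and exchanging the order of summation (Tonelli for
a nonnegative double series) reduces the claim to the column estimate
`∑ x, e^{-β|x|} |Q x y| ≤ L (β - α)^{-1/2} e^{-α|y|}`. Only the `n_y` points of `B_y` contribute to
column `y`, each with weight `e^{-β|x|} ≤ e^{βρ} e^{-β|y|}` and entry at most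
`C (𝒩 log (1 + |y| + ρ))^q`, so the column sum is at most
`C e^{βρ} (𝒩 log (1 + |y| + ρ))^{q+1} e^{-β|y|}`.
A power of a logarithm is dominated by a square root, `(log u)^p ≤ (2p)^p √u`, and
`√u e^{-δu} ≤ δ^{-1/2}`; this is where the order `1/2` comes from. -/

lemma abs_tsum_le_tsum_abs {ι : Type*} (f : ι → ℝ) : |∑' i, f i| ≤ ∑' i, |f i| := by
  by_cases hf : Summable fun i => |f i|
  · simpa only [Real.norm_eq_abs] using
      norm_tsum_le_tsum_norm (f := f) (by simpa only [Real.norm_eq_abs] using hf)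
  · rw [tsum_eq_zero_of_not_summable (summable_abs_iff.not.mp hf), abs_zero]
    exact tsum_nonneg fun i => abs_nonneg (f i)

lemma summable_and_tsum_mul_abs_tsum_le_of_column_le {ι : Type*} (K : ι → ι → ℝ) {v w : ι → ℝ}
    (hv : 0 ≤ v) {M : ℝ}
    (hcol : ∀ y, Summable (fun x => v x * |K x y|) ∧ ∑' x, v x * |K x y| ≤ M * w y)
    {z : ι → ℝ} (hz : Summable fun y => w y * |z y|) :
    Summable (fun x => v x * |∑' y, K x y * z y|) ∧
      ∑' x, v x * |∑' y, K x y * z y| ≤ M * ∑' y, w y * |z y| := by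
  let F : ι → ι → ℝ := fun x y => v x * |K x y| * |z y|
  have hF : ∀ x y, 0 ≤ F x y := fun x y =>
    mul_nonneg (mul_nonneg (hv x) (abs_nonneg _)) (abs_nonneg _)
  have hcolF : ∀ y, ∑' x, F x y ≤ M * (w y * |z y|) := fun y => by
    simp only [F]
    rw [tsum_mul_right, ← mul_assoc]
    exact mul_le_mul_of_nonneg_right (hcol y).2 (abs_nonneg _)
  have hcols : Summable fun y => ∑' x, F x y :=
    (hz.mul_left M).of_nonneg_of_le (fun y => tsum_nonneg (hF · y)) hcolF
  have hFsum : Summable (Function.uncurry F) := by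
    have : Summable fun p : ι × ι => F p.2 p.1 :=
      (summable_prod_of_nonneg fun p => hF p.2 p.1).2 ⟨fun y => (hcol y).1.mul_right |z y|, hcols⟩
    exact this.prod_symm
  have hrows : Summable fun x => ∑' y, F x y :=
    ((summable_prod_of_nonneg fun p => hF p.1 p.2).1 hFsum).2
  have hrow : ∀ x, v x * |∑' y, K x y * z y| ≤ ∑' y, F x y := fun x => by
    simp only [F, mul_assoc, tsum_mul_left, ← abs_mul]
    exact mul_le_mul_of_nonneg_left (abs_tsum_le_tsum_abs _) (hv x)
  have hsum : Summable fun x => v x * |∑' y, K x y * z y| :=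
    hrows.of_nonneg_of_le (fun x => mul_nonneg (hv x) (abs_nonneg _)) hrow
  refine ⟨hsum, ?_⟩
  calc ∑' x, v x * |∑' y, K x y * z y| ≤ ∑' x, ∑' y, F x y := hsum.tsum_le_tsum hrow hrows
    _ = ∑' y, ∑' x, F x y := hFsum.tsum_comm.symm
    _ ≤ ∑' y, M * (w y * |z y|) := hcols.tsum_le_tsum hcolF (hz.mul_left M)
    _ = M * ∑' y, w y * |z y| := tsum_mul_left

lemma Set.Finite.summable_and_tsum_le_ncard_mul {ι : Type*} {f : ι → ℝ} {s : Set ι}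
    (hs : s.Finite) (hf : ∀ i ∉ s, f i = 0) {c : ℝ} (hc : ∀ i ∈ s, f i ≤ c) :
    Summable f ∧ ∑' i, f i ≤ s.ncard * c := by
  have hf' : ∀ i ∉ hs.toFinset, f i = 0 := fun i hi => hf i (by simpa using hi)
  refine ⟨summable_of_ne_finset_zero hf', ?_⟩
  rw [tsum_eq_sum hf', ncard_eq_toFinset_card s hs, ← nsmul_eq_mul]
  exact Finset.sum_le_card_nsmul _ _ _ fun i hi => hc i (by simpa using hi)

lemma sqrt_mul_exp_neg_mul_le {δ u : ℝ} (hδ : 0 < δ) (hu : 0 ≤ u) :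
    √u * exp (-(δ * u)) ≤ 1 / √δ := by
  have hδu : 0 ≤ δ * u := mul_nonneg hδ.le hu
  have hsqrt : √(δ * u) ≤ exp (δ * u) := by
    -- `√s ≤ 1 + s ≤ eˢ`
    refine le_trans ?_ (add_one_le_exp _)
    rw [sqrt_le_left (by linarith)]
    nlinarith
  rw [le_div_iff₀ (sqrt_pos.2 hδ)]
  calc √u * exp (-(δ * u)) * √δ = √(δ * u) * exp (-(δ * u)) := by
        rw [sqrt_mul hδ.le]; ring
    _ ≤ exp (δ * u) * exp (-(δ * u)) := by gcongr
    _ = 1 := by rw [← exp_add, add_neg_cancel, exp_zero]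

lemma log_rpow_le_mul_sqrt {p u : ℝ} (hp : 0 < p) (hu : 1 ≤ u) :
    log u ^ p ≤ (2 * p) ^ p * √u := by
  have hs : 0 < 1 / (2 * p) := by positivity
  calc log u ^ p ≤ (u ^ (1 / (2 * p)) / (1 / (2 * p))) ^ p := by
        gcongr
        · exact log_nonneg hu
        · exact log_le_rpow_div (by linarith) hs
    _ = (2 * p) ^ p * √u := by
        have hu0 : 0 ≤ u := by linarith
        rw [div_eq_mul_one_div, one_div_one_div, mul_comm, mul_rpow (by positivity)
          (by positivity), ← rpow_mul hu0, sqrt_eq_rpow]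
        congr 2
        field_simp

lemma log_rpow_mul_exp_neg_mul_le {p δ ρ t : ℝ} (hp : 0 < p) (hδ : 0 < δ) (hρ : 0 ≤ ρ)
    (ht : 0 ≤ t) :
    log (1 + t + ρ) ^ p * exp (-(δ * t)) ≤ (2 * p) ^ p * exp (δ * (1 + ρ)) / √δ := by
  have hu : 1 ≤ 1 + t + ρ := by linarith
  have hexp : exp (-(δ * t)) = exp (δ * (1 + ρ)) * exp (-(δ * (1 + t + ρ))) := by
    rw [← exp_add]; ring_nf
  calc log (1 + t + ρ) ^ p * exp (-(δ * t))
      ≤ (2 * p) ^ p * √(1 + t + ρ) * exp (-(δ * t)) := by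
        gcongr; exact log_rpow_le_mul_sqrt hp hu
    _ = (2 * p) ^ p * exp (δ * (1 + ρ)) * (√(1 + t + ρ) * exp (-(δ * (1 + t + ρ)))) := by
        rw [hexp]; ring
    _ ≤ (2 * p) ^ p * exp (δ * (1 + ρ)) * (1 / √δ) := by
        gcongr; exact sqrt_mul_exp_neg_mul_le hδ (by linarith)
    _ = (2 * p) ^ p * exp (δ * (1 + ρ)) / √δ := by ring

section Lattice

variable {E : Type*} [SeminormedAddCommGroup E] {γ : Set E} {ρ 𝒩 C q β : ℝ}
  {Q : γ → γ → ℝ}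

lemma exp_neg_mul_norm_mul_abs_le (hβ : 0 ≤ β) (h𝒩 : 0 ≤ 𝒩) (hC : 0 ≤ C) (hq : 0 ≤ q)
    (hn : ∀ x ∈ γ, ((γ ∩ closedBall x ρ).ncard : ℝ) ≤ 𝒩 * log (1 + ‖x‖))
    (hQb : ∀ x y : γ, |Q x y| ≤ C * ((γ ∩ closedBall (x : E) ρ).ncard : ℝ) ^ q)
    {x y : γ} (hxy : dist (x : E) y ≤ ρ) :
    exp (-β * ‖(x : E)‖) * |Q x y| ≤
      C * exp (β * ρ) * (𝒩 * log (1 + ‖(y : E)‖ + ρ)) ^ q * exp (-β * ‖(y : E)‖) := by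
  have hx : ‖(x : E)‖ ≤ ‖(y : E)‖ + ρ := norm_le_norm_add_const_of_dist_le hxy
  have hy : ‖(y : E)‖ ≤ ‖(x : E)‖ + ρ :=
    norm_le_norm_add_const_of_dist_le (by rwa [dist_comm])
  have hexp : exp (-β * ‖(x : E)‖) ≤ exp (β * ρ) * exp (-β * ‖(y : E)‖) := by
    rw [← exp_add]; gcongr; nlinarith
  have hQ : |Q x y| ≤ C * (𝒩 * log (1 + ‖(y : E)‖ + ρ)) ^ q := by
    refine (hQb x y).trans ?_
    gcongr
    exact (hn x x.2).trans
      (mul_le_mul_of_nonneg_left (log_le_log (by positivity) (by linarith)) h𝒩)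
  calc exp (-β * ‖(x : E)‖) * |Q x y|
      ≤ exp (β * ρ) * exp (-β * ‖(y : E)‖) * (C * (𝒩 * log (1 + ‖(y : E)‖ + ρ)) ^ q) := by
        gcongr
    _ = _ := by ring

lemma summable_and_tsum_exp_neg_mul_norm_mul_abs_le (hfin : ∀ y, (γ ∩ closedBall y ρ).Finite)
    (hρ : 0 ≤ ρ) (hβ : 0 ≤ β) (h𝒩 : 0 ≤ 𝒩) (hC : 0 ≤ C) (hq : 0 ≤ q)
    (hn : ∀ x ∈ γ, ((γ ∩ closedBall x ρ).ncard : ℝ) ≤ 𝒩 * log (1 + ‖x‖))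
    (hQ0 : ∀ x y : γ, (y : E) ∉ closedBall (x : E) ρ → Q x y = 0)
    (hQb : ∀ x y : γ, |Q x y| ≤ C * ((γ ∩ closedBall (x : E) ρ).ncard : ℝ) ^ q) (y : γ) :
    Summable (fun x : γ => exp (-β * ‖(x : E)‖) * |Q x y|) ∧
      ∑' x : γ, exp (-β * ‖(x : E)‖) * |Q x y| ≤
        C * exp (β * ρ) * (𝒩 * log (1 + ‖(y : E)‖ + ρ)) ^ (q + 1) * exp (-β * ‖(y : E)‖) := by
  set ℓ := 𝒩 * log (1 + ‖(y : E)‖ + ρ)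
  have hℓ : 0 ≤ ℓ := mul_nonneg h𝒩 (log_nonneg (by linarith [norm_nonneg (y : E)]))
  set s : Set γ := (↑) ⁻¹' (γ ∩ closedBall (y : E) ρ)
  have hs : s.Finite := (hfin y).preimage Subtype.val_injective.injOn
  have hcard : (s.ncard : ℝ) ≤ ℓ := by
    rw [ncard_preimage_of_injective_subset_range Subtype.val_injective (by simp)]
    exact (hn y y.2).trans
      (mul_le_mul_of_nonneg_left (log_le_log (by positivity) (by linarith)) h𝒩)
  have hzero : ∀ x ∉ s, exp (-β * ‖(x : E)‖) * |Q x y| = 0 := fun x hx => by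
    rw [hQ0 x y fun h => hx ⟨x.2, mem_closedBall_comm.1 h⟩, abs_zero, mul_zero]
  obtain ⟨hsum, hle⟩ := hs.summable_and_tsum_le_ncard_mul hzero fun x hx =>
    exp_neg_mul_norm_mul_abs_le hβ h𝒩 hC hq hn hQb (mem_closedBall.1 hx.2)
  refine ⟨hsum, hle.trans ?_⟩
  rw [rpow_add_one' hℓ (by linarith)]
  calc (s.ncard : ℝ) * (C * exp (β * ρ) * ℓ ^ q * exp (-β * ‖(y : E)‖))
      ≤ ℓ * (C * exp (β * ρ) * ℓ ^ q * exp (-β * ‖(y : E)‖)) := by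
        have := rpow_nonneg hℓ q
        gcongr
    _ = C * exp (β * ρ) * (ℓ ^ q * ℓ) * exp (-β * ‖(y : E)‖) := by ring

lemma summable_and_tsum_exp_neg_mul_norm_mul_abs_le_div_sqrt
    (hfin : ∀ y, (γ ∩ closedBall y ρ).Finite) (hρ : 0 ≤ ρ) (h𝒩 : 0 ≤ 𝒩) (hC : 0 ≤ C)
    (hq : 0 ≤ q) (hn : ∀ x ∈ γ, ((γ ∩ closedBall x ρ).ncard : ℝ) ≤ 𝒩 * log (1 + ‖x‖))
    (hQ0 : ∀ x y : γ, (y : E) ∉ closedBall (x : E) ρ → Q x y = 0)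
    (hQb : ∀ x y : γ, |Q x y| ≤ C * ((γ ∩ closedBall (x : E) ρ).ncard : ℝ) ^ q)
    {α A : ℝ} (hα : 0 ≤ α) (hαβ : α < β) (hβA : β ≤ A) (y : γ) :
    Summable (fun x : γ => exp (-β * ‖(x : E)‖) * |Q x y|) ∧
      ∑' x : γ, exp (-β * ‖(x : E)‖) * |Q x y| ≤
        C * (2 * (q + 1) * 𝒩) ^ (q + 1) * exp (A * (1 + 2 * ρ)) / √(β - α) *
          exp (-α * ‖(y : E)‖) := by
  obtain ⟨hsum, hle⟩ := summable_and_tsum_exp_neg_mul_norm_mul_abs_le hfin hρ (β := β)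
    (by linarith) h𝒩 hC hq hn hQ0 hQb y
  refine ⟨hsum, hle.trans ?_⟩
  set t := ‖(y : E)‖
  have hδ : 0 < β - α := by linarith
  have hlog : 0 ≤ log (1 + t + ρ) := log_nonneg (by linarith [norm_nonneg (y : E)])
  have hsplit : exp (-β * t) = exp (-((β - α) * t)) * exp (-α * t) := by
    rw [← exp_add]; ring_nf
  calc C * exp (β * ρ) * (𝒩 * log (1 + t + ρ)) ^ (q + 1) * exp (-β * t)
      = C * exp (β * ρ) * 𝒩 ^ (q + 1) *
          (log (1 + t + ρ) ^ (q + 1) * exp (-((β - α) * t))) * exp (-α * t) := by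
        rw [mul_rpow h𝒩 hlog, hsplit]; ring
    _ ≤ C * exp (β * ρ) * 𝒩 ^ (q + 1) *
          ((2 * (q + 1)) ^ (q + 1) * exp ((β - α) * (1 + ρ)) / √(β - α)) * exp (-α * t) := by
        gcongr
        exact log_rpow_mul_exp_neg_mul_le (by linarith) hδ hρ (norm_nonneg _)
    _ = C * (2 * (q + 1) * 𝒩) ^ (q + 1) * exp (β * ρ + (β - α) * (1 + ρ)) / √(β - α) *
          exp (-α * t) := by
        rw [mul_rpow (by linarith) h𝒩, exp_add]; ring
    _ ≤ C * (2 * (q + 1) * 𝒩) ^ (q + 1) * exp (A * (1 + 2 * ρ)) / √(β - α) *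
          exp (-α * t) := by
        gcongr
        nlinarith

end Lattice

theorem statement8_general (d : ℕ) (γ : Set (EuclideanSpace ℝ (Fin d)))
    (hloc : ∀ K : Set (EuclideanSpace ℝ (Fin d)), IsCompact K → (γ ∩ K).Finite)
    (ρ : ℝ) (hρ : 0 < ρ) (𝒩 : ℝ) (h𝒩 : 0 ≤ 𝒩)
    (hn : ∀ x ∈ γ, ((γ ∩ closedBall x ρ).ncard : ℝ) ≤ 𝒩 * Real.log (1 + ‖x‖))
    (amin amax : ℝ) (hamin : 0 < amin)
    (Q : γ → γ → ℝ)
    (hQ0 : ∀ x y : γ, (y : EuclideanSpace ℝ (Fin d)) ∉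
      closedBall (x : EuclideanSpace ℝ (Fin d)) ρ → Q x y = 0)
    (C q : ℝ) (hC : 0 < C) (hq : 1 ≤ q)
    (hQb : ∀ x y : γ, |Q x y| ≤
      C * ((γ ∩ closedBall (x : EuclideanSpace ℝ (Fin d)) ρ).ncard : ℝ) ^ q) :
    ∃ L > (0 : ℝ), ∀ α β : ℝ, amin ≤ α → α < β → β ≤ amax → ∀ z : γ → ℝ,
      Summable (fun x : γ => Real.exp (-α * ‖(x : EuclideanSpace ℝ (Fin d))‖) * |z x|) →
      Summable (fun x : γ => Real.exp (-β * ‖(x : EuclideanSpace ℝ (Fin d))‖) *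
          |∑' y : γ, Q x y * z y|) ∧
      (∑' x : γ, Real.exp (-β * ‖(x : EuclideanSpace ℝ (Fin d))‖) *
          |∑' y : γ, Q x y * z y|) ≤
        L / Real.sqrt (β - α) *
          ∑' x : γ, Real.exp (-α * ‖(x : EuclideanSpace ℝ (Fin d))‖) * |z x| := by
  -- Working with `𝒩 + 1` keeps the constant positive when `𝒩 = 0`.
  have h𝒩₁ : 0 < 𝒩 + 1 := by linarith
  have hn₁ : ∀ x ∈ γ, ((γ ∩ closedBall x ρ).ncard : ℝ) ≤ (𝒩 + 1) * log (1 + ‖x‖) :=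
    fun x hx => (hn x hx).trans
      (mul_le_mul_of_nonneg_right (by linarith) (log_nonneg (by linarith [norm_nonneg x])))
  have hL : 0 < C * (2 * (q + 1) * (𝒩 + 1)) ^ (q + 1) * exp (amax * (1 + 2 * ρ)) := by
    have : 0 < 2 * (q + 1) * (𝒩 + 1) := by nlinarith
    positivity
  refine ⟨_, hL, fun α β hα hαβ hβ z hz => ?_⟩
  exact summable_and_tsum_mul_abs_tsum_le_of_column_le Q (fun x => (exp_pos _).le)
    (summable_and_tsum_exp_neg_mul_norm_mul_abs_le_div_sqrt
      (fun y => hloc _ (isCompact_closedBall y ρ)) hρ.le h𝒩₁.le hC.le (by linarith) hn₁ hQ0 hQb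
      (by linarith) hαβ hβ) hz

theorem statement8 (d : ℕ) (γ : Set (EuclideanSpace ℝ (Fin d)))
    (hloc : ∀ K : Set (EuclideanSpace ℝ (Fin d)), IsCompact K → (γ ∩ K).Finite)
    (ρ : ℝ) (hρ : 0 < ρ) (𝒩 : ℝ) (h𝒩 : 0 ≤ 𝒩)
    (hn : ∀ x ∈ γ, ((γ ∩ closedBall x ρ).ncard : ℝ) ≤ 𝒩 * Real.log (1 + ‖x‖))
    (amin amax : ℝ) (hamin : 0 < amin) (hminmax : amin < amax)
    (Q : γ → γ → ℝ)
    (hQ0 : ∀ x y : γ, (y : EuclideanSpace ℝ (Fin d)) ∉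
      closedBall (x : EuclideanSpace ℝ (Fin d)) ρ → Q x y = 0)
    (C q : ℝ) (hC : 0 < C) (hq : 1 ≤ q)
    (hQb : ∀ x y : γ, |Q x y| ≤
      C * ((γ ∩ closedBall (x : EuclideanSpace ℝ (Fin d)) ρ).ncard : ℝ) ^ q) :
    ∃ L > (0 : ℝ), ∀ α β : ℝ, amin ≤ α → α < β → β ≤ amax → ∀ z : γ → ℝ,
      Summable (fun x : γ => Real.exp (-α * ‖(x : EuclideanSpace ℝ (Fin d))‖) * |z x|) →
      Summable (fun x : γ => Real.exp (-β * ‖(x : EuclideanSpace ℝ (Fin d))‖) *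
          |∑' y : γ, Q x y * z y|) ∧
      (∑' x : γ, Real.exp (-β * ‖(x : EuclideanSpace ℝ (Fin d))‖) *
          |∑' y : γ, Q x y * z y|) ≤
        L / Real.sqrt (β - α) *
          ∑' x : γ, Real.exp (-α * ‖(x : EuclideanSpace ℝ (Fin d))‖) * |z x| :=
  statement8_general d γ hloc ρ hρ 𝒩 h𝒩 hn amin amax hamin Q hQ0 C q hC hq hQb
end

section
/- Let {X_𝔞}_{𝔞∈[𝔞₋,𝔞₊]} (0 < 𝔞₋ < 𝔞₊) be a scale of Banach spaces, let F be an Ovsjannikov map of order q ≥ 0 and constant L > 0 on this scale, fix T > 0 and x₀ ∈ X_{𝔞₋}, and for a continuous map f : [0,T] → X_α define ℐ(f)(t) = x₀ + ∫₀ᵗ F(f(s)) ds (Bochner integral in X_β). Then for all 𝔞₋ ≤ α < β ≤ 𝔞₊ and all continuous f, g : [0,T] → X_α: ℐ(f) is a continuous map [0,T] → X_β, and sup_{t∈[0,T]} ‖ℐ(f)(t) − ℐ(g)(t)‖_{X_β} ≤ (LT/(β−α)^q) · sup_{t∈[0,T]} ‖f(t) − g(t)‖_{X_α}. In other words, ℐ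 is an Ovsjannikov map of order q and constant LT on the scale of Banach spaces {C([0,T], X_𝔞)}_{𝔞∈[𝔞₋,𝔞₊]} equipped with supremum norms. -/
open MeasureTheory Set Filter ENNReal

noncomputable section

/-- `f : [0,T] → X_a` is continuous, where `X_a` is the subspace of the ambient Banach
space `E` on which the extended norm `N a` is finite, with the metric induced by `N a`. -/
def ScaleContOn {E : Type*} [NormedAddCommGroup E]
    (N : ℝ → E → ℝ≥0∞) (a T : ℝ) (f : ℝ → E) : Prop :=
  (∀ t ∈ Icc (0 : ℝ) T, N a (f t) ≠ ⊤) ∧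
  ∀ t₀ ∈ Icc (0 : ℝ) T,
    Tendsto (fun t => N a (f t - f t₀)) (nhdsWithin t₀ (Icc (0 : ℝ) T)) (nhds 0)

/-- The map `ℐ(f)(t) = x₀ + ∫₀ᵗ F(f(s)) ds` (Bochner integral in the ambient space). -/
def Imap {E : Type*} [NormedAddCommGroup E] [NormedSpace ℝ E] [CompleteSpace E]
    (F : E → E) (x₀ : E) (f : ℝ → E) : ℝ → E :=
  fun t => x₀ + ∫ s in (0 : ℝ)..t, F (f s)

/-!
Put `X_a = {x | N a x < ∞}` with the norm `N a`. The hypotheses make `X_a` a Banach space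
continuously embedded in `E`, `ScaleContOn` is ordinary continuity into `X_a`, and `F` restricts
to a map `X_α → X_β` that is Lipschitz with constant `L / (β - α) ^ q`. Since the embedding
`X_β → E` is continuous linear, `ℐ` may be computed with the Bochner integral of `X_β`, where
`‖∫₀ᵗ (F (f s) - F (g s)) ds‖ ≤ t · L / (β - α) ^ q · sup ‖f - g‖` is the usual estimate.
-/

open scoped NNReal Topology

section IntegralMap

variable {G H : Type*} [PseudoEMetricSpace G] [NormedAddCommGroup H] [NormedSpace ℝ H]

def integralMap (Φ : G → H) (x₀ : H) (u : ℝ → G) : ℝ → H :=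
  fun t => x₀ + ∫ s in (0 : ℝ)..t, Φ (u s)

variable {Φ : G → H} {u v : ℝ → G} {T : ℝ}

theorem continuousOn_integralMap [CompleteSpace H] (hΦ : Continuous Φ)
    (hu : ContinuousOn u (Icc 0 T)) (x₀ : H) :
    ContinuousOn (integralMap Φ x₀ u) (Icc 0 T) :=
  continuousOn_const.add <|
    (intervalIntegral.continuousOn_primitive (hΦ.comp_continuousOn hu).integrableOn_Icc).congr
      fun _ ht => intervalIntegral.integral_of_le ht.1

theorem edist_integralMap_le {K : ℝ≥0} (hΦ : LipschitzWith K Φ)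
    (hu : ContinuousOn u (Icc 0 T)) (hv : ContinuousOn v (Icc 0 T)) (x₀ : H)
    {t : ℝ} (ht : t ∈ Icc 0 T) :
    edist (integralMap Φ x₀ u t) (integralMap Φ x₀ v t) ≤
      K * ENNReal.ofReal t * ⨆ s ∈ Icc 0 T, edist (u s) (v s) := by
  have hsub : Ioc 0 t ⊆ Icc 0 T := Ioc_subset_Icc_self.trans (Icc_subset_Icc_right ht.2)
  have hint : ∀ w : ℝ → G, ContinuousOn w (Icc 0 T) →
      IntervalIntegrable (fun s => Φ (w s)) volume 0 t := fun w hw =>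
    ((hΦ.continuous.comp_continuousOn hw).mono (by
      rw [uIcc_of_le ht.1]; exact Icc_subset_Icc_right ht.2)).intervalIntegrable
  calc edist (integralMap Φ x₀ u t) (integralMap Φ x₀ v t)
      = ‖∫ s in Ioc 0 t, (Φ (u s) - Φ (v s))‖ₑ := by
        rw [integralMap, integralMap, edist_add_left, edist_eq_enorm_sub,
          ← intervalIntegral.integral_sub (hint u hu) (hint v hv),
          intervalIntegral.integral_of_le ht.1]
    _ ≤ ∫⁻ s in Ioc 0 t, ‖Φ (u s) - Φ (v s)‖ₑ := enorm_integral_le_lintegral_enorm _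
    _ ≤ ∫⁻ _ in Ioc 0 t, K * ⨆ s ∈ Icc 0 T, edist (u s) (v s) := by
        refine setLIntegral_mono measurable_const fun s hs => ?_
        rw [← edist_eq_enorm_sub]
        exact (hΦ (u s) (v s)).trans
          (by gcongr; exact le_iSup₂ (f := fun s _ => edist (u s) (v s)) s (hsub hs))
    _ = K * ENNReal.ofReal t * ⨆ s ∈ Icc 0 T, edist (u s) (v s) := by
        rw [setLIntegral_const, Real.volume_Ioc, sub_zero]; ring

theorem iSup_edist_integralMap_le {K : ℝ≥0} (hΦ : LipschitzWith K Φ)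
    (hu : ContinuousOn u (Icc 0 T)) (hv : ContinuousOn v (Icc 0 T)) (x₀ : H) :
    ⨆ t ∈ Icc 0 T, edist (integralMap Φ x₀ u t) (integralMap Φ x₀ v t) ≤
      K * ENNReal.ofReal T * ⨆ s ∈ Icc 0 T, edist (u s) (v s) :=
  iSup₂_le fun _ ht => (edist_integralMap_le hΦ hu hv x₀ ht).trans <| by
    gcongr; exact ht.2

end IntegralMap

structure IsBanachENorm {E : Type*} [NormedAddCommGroup E] [NormedSpace ℝ E] (N : E → ℝ≥0∞) :
    Prop where
  norm_le : ∀ x : E, (‖x‖₊ : ℝ≥0∞) ≤ N x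
  add_le : ∀ x y : E, N (x + y) ≤ N x + N y
  smul_eq : ∀ (c : ℝ) (x : E), N (c • x) = (‖c‖₊ : ℝ≥0∞) * N x
  complete : ∀ u : ℕ → E, (∀ n, N (u n) ≠ ⊤) →
    (∀ ε : ℝ≥0∞, 0 < ε → ∃ K : ℕ, ∀ m ≥ K, ∀ n ≥ K, N (u m - u n) < ε) →
    ∃ x : E, N x ≠ ⊤ ∧ Tendsto (fun n => N (u n - x)) atTop (𝓝 0)

namespace IsBanachENorm

variable {E : Type*} [NormedAddCommGroup E] [NormedSpace ℝ E] {N : E → ℝ≥0∞}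

theorem map_zero (h : IsBanachENorm N) : N 0 = 0 := by
  simpa using h.smul_eq 0 0

theorem map_neg (h : IsBanachENorm N) (x : E) : N (-x) = N x := by
  simpa using h.smul_eq (-1) x

def Space (_ : IsBanachENorm N) : Type _ := {x : E // N x ≠ ⊤}

variable (h : IsBanachENorm N)

def submodule : Submodule ℝ E where
  carrier := {x | N x ≠ ⊤}
  zero_mem' := by simp [h.map_zero]
  add_mem' {x y} hx hy := ne_top_of_le_ne_top (add_ne_top.2 ⟨hx, hy⟩) (h.add_le x y)
  smul_mem' c x hx := by
    change N (c • x) ≠ ⊤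
    rw [h.smul_eq]
    exact mul_ne_top coe_ne_top hx

instance : AddCommGroup h.Space := inferInstanceAs (AddCommGroup h.submodule)

instance : Module ℝ h.Space := inferInstanceAs (Module ℝ h.submodule)

instance : NormedAddCommGroup h.Space :=
  AddGroupNorm.toNormedAddCommGroup
    { toFun := fun x => (N x.1).toReal
      map_zero' := by
        change (N 0).toReal = 0
        rw [h.map_zero, toReal_zero]
      add_le' := fun x y => by
        rw [← toReal_add x.2 y.2]
        exact toReal_mono (add_ne_top.2 ⟨x.2, y.2⟩) (h.add_le x.1 y.1)
      neg' := fun x => congrArg ENNReal.toReal (h.map_neg x.1)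
      eq_zero_of_map_eq_zero' := fun x hx => by
        have hN : N x.1 = 0 := (toReal_eq_zero_iff _).1 hx |>.resolve_right x.2
        exact Subtype.ext (show x.1 = 0 by simpa [hN] using h.norm_le x.1) }

theorem norm_def (x : h.Space) : ‖x‖ = (N x.1).toReal := rfl

theorem enorm_eq (x : h.Space) : ‖x‖ₑ = N x.1 := by
  rw [← ofReal_norm, h.norm_def, ofReal_toReal x.2]

theorem edist_eq (x y : h.Space) : edist x y = N (x.1 - y.1) := by
  rw [edist_eq_enorm_sub, h.enorm_eq]; rfl

instance : NormedSpace ℝ h.Space where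
  norm_smul_le c x := by
    simp only [h.norm_def]
    rw [show (c • x).1 = c • x.1 from rfl, h.smul_eq, toReal_mul]
    simp

instance : CompleteSpace h.Space := by
  refine EMetric.complete_of_cauchySeq_tendsto fun u hu => ?_
  obtain ⟨x, hx, hlim⟩ := h.complete (fun n => (u n).1) (fun n => (u n).2) fun ε hε => by
    simpa only [h.edist_eq] using EMetric.cauchySeq_iff.1 hu ε hε
  exact ⟨⟨x, hx⟩, tendsto_iff_edist_tendsto_0.2 <|
    (tendsto_congr fun n => h.edist_eq (u n) ⟨x, hx⟩).2 hlim⟩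

def subtypeL : h.Space →L[ℝ] E :=
  LinearMap.mkContinuous
    { toFun := fun x => x.1, map_add' := fun _ _ => rfl, map_smul' := fun _ _ => rfl } 1
    fun x => by
      rw [one_mul, h.norm_def, ← toReal_enorm]
      exact toReal_mono x.2 (h.norm_le x.1)

theorem coe_intervalIntegral [CompleteSpace E] {w : ℝ → h.Space} {a b : ℝ}
    (hw : IntervalIntegrable w volume a b) :
    (∫ s in a..b, w s).1 = ∫ s in a..b, (w s).1 :=
  ((h.subtypeL).intervalIntegral_comp_comm hw).symm

theorem continuousWithinAt_iff {u : ℝ → h.Space} {f : ℝ → E} {s : Set ℝ}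
    (hfu : EqOn (fun t => (u t).1) f s) {t₀ : ℝ} (ht₀ : t₀ ∈ s) :
    ContinuousWithinAt u s t₀ ↔ Tendsto (fun t => N (f t - f t₀)) (𝓝[s] t₀) (𝓝 0) := by
  rw [ContinuousWithinAt, tendsto_iff_edist_tendsto_0]
  exact tendsto_congr' <| eventually_nhdsWithin_of_forall fun t ht => by
    dsimp only
    rw [h.edist_eq, ← hfu ht, ← hfu ht₀]

def restrictMap {N' : E → ℝ≥0∞} (h' : IsBanachENorm N') (F : E → E)
    (hF : ∀ x, N x ≠ ⊤ → N' (F x) ≠ ⊤) : h.Space → h'.Space :=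
  fun x => ⟨F x.1, hF x.1 x.2⟩

theorem lipschitzWith_restrictMap {N' : E → ℝ≥0∞} (h' : IsBanachENorm N') {F : E → E}
    (hF : ∀ x, N x ≠ ⊤ → N' (F x) ≠ ⊤) {K : ℝ≥0}
    (hK : ∀ x y, N x ≠ ⊤ → N y ≠ ⊤ → N' (F x - F y) ≤ K * N (x - y)) :
    LipschitzWith K (h.restrictMap h' F hF) := fun x y => by
  rw [h.edist_eq, h'.edist_eq]
  exact hK x.1 y.1 x.2 y.2

theorem coe_integralMap_eqOn_imap [CompleteSpace E] {N' : E → ℝ≥0∞}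
    (h' : IsBanachENorm N') {F : E → E} (hF : ∀ x, N x ≠ ⊤ → N' (F x) ≠ ⊤)
    (hFc : Continuous (h.restrictMap h' F hF)) {x₀ : E} (hx₀ : N' x₀ ≠ ⊤) {T : ℝ}
    {u : ℝ → h.Space} {f : ℝ → E} (hu : ContinuousOn u (Icc 0 T))
    (hfu : EqOn (fun t => (u t).1) f (Icc 0 T)) :
    EqOn (fun t => (integralMap (h.restrictMap h' F hF) ⟨x₀, hx₀⟩ u t).1) (Imap F x₀ f)
      (Icc 0 T) := fun t ht => by
  have hsub : uIcc 0 t ⊆ Icc 0 T := by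
    rw [uIcc_of_le ht.1]; exact Icc_subset_Icc_right ht.2
  change x₀ + (∫ s in (0 : ℝ)..t, h.restrictMap h' F hF (u s)).1 = x₀ + _
  rw [h'.coe_intervalIntegral (w := fun s => h.restrictMap h' F hF (u s))
    ((hFc.comp_continuousOn hu).mono hsub).intervalIntegrable]
  exact congrArg _ <| intervalIntegral.integral_congr fun s hs =>
    congrArg F (hfu (hsub hs))

end IsBanachENorm

theorem IsBanachENorm.scaleContOn_iff {E : Type*} [NormedAddCommGroup E] [NormedSpace ℝ E]
    {N : ℝ → E → ℝ≥0∞} {a T : ℝ} (h : IsBanachENorm (N a)) {f : ℝ → E} :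
    ScaleContOn N a T f ↔
      ∃ u : ℝ → h.Space, ContinuousOn u (Icc 0 T) ∧ EqOn (fun t => (u t).1) f (Icc 0 T) := by
  constructor
  · rintro ⟨hfin, hcont⟩
    have hlift (t : ℝ) : ∃ x : h.Space, t ∈ Icc 0 T → x.1 = f t :=
      if ht : t ∈ Icc 0 T then ⟨⟨f t, hfin t ht⟩, fun _ => rfl⟩ else ⟨0, fun ht' => absurd ht' ht⟩
    choose u hfu using hlift
    exact ⟨u, fun t ht => (h.continuousWithinAt_iff hfu ht).2 (hcont t ht), hfu⟩
  · rintro ⟨u, hu, hfu⟩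
    exact ⟨fun t ht => hfu ht ▸ (u t).2,
      fun t ht => (h.continuousWithinAt_iff hfu ht).1 (hu t ht)⟩

theorem statement10_general
    -- the scale of Banach spaces, realised inside the ambient space `E = X_{amax}`
    (E : Type*) [NormedAddCommGroup E] [NormedSpace ℝ E] [CompleteSpace E]
    (amin amax : ℝ)
    (N : ℝ → E → ℝ≥0∞)
    (htop : ∀ x : E, N amax x = (‖x‖₊ : ℝ≥0∞))
    (hmono : ∀ a b : ℝ, amin ≤ a → a ≤ b → b ≤ amax → ∀ x : E, N b x ≤ N a x)
    (hadd : ∀ a : ℝ, amin ≤ a → a ≤ amax → ∀ x y : E, N a (x + y) ≤ N a x + N a y)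
    (hsmul : ∀ a : ℝ, amin ≤ a → a ≤ amax → ∀ (c : ℝ) (x : E),
      N a (c • x) = (‖c‖₊ : ℝ≥0∞) * N a x)
    (hcomplete : ∀ a : ℝ, amin ≤ a → a ≤ amax → ∀ u : ℕ → E,
      (∀ n, N a (u n) ≠ ⊤) →
      (∀ ε : ℝ≥0∞, 0 < ε → ∃ K : ℕ, ∀ m ≥ K, ∀ n ≥ K, N a (u m - u n) < ε) →
      ∃ x : E, N a x ≠ ⊤ ∧ Tendsto (fun n => N a (u n - x)) atTop (nhds 0))
    -- the Ovsjannikov map `F` of order `q` and constant `L`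
    (q L : ℝ) (F : E → E)
    (hFmap : ∀ a b : ℝ, amin ≤ a → a < b → b ≤ amax → ∀ x : E,
      N a x ≠ ⊤ → N b (F x) ≠ ⊤)
    (hFlip : ∀ a b : ℝ, amin ≤ a → a < b → b ≤ amax → ∀ x y : E,
      N a x ≠ ⊤ → N a y ≠ ⊤ →
      N b (F x - F y) ≤ ENNReal.ofReal (L / (b - a) ^ q) * N a (x - y))
    (T : ℝ) (hT : 0 < T) (x₀ : E) (hx₀ : N amin x₀ ≠ ⊤) :
    ∀ α β : ℝ, amin ≤ α → α < β → β ≤ amax →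
      ∀ f g : ℝ → E, ScaleContOn N α T f → ScaleContOn N α T g →
        ScaleContOn N β T (Imap F x₀ f) ∧
        (⨆ t ∈ Icc (0 : ℝ) T, N β (Imap F x₀ f t - Imap F x₀ g t)) ≤
          ENNReal.ofReal (L * T / (β - α) ^ q) *
            ⨆ t ∈ Icc (0 : ℝ) T, N α (f t - g t) := by
  intro α β hα hαβ hβ f g hf hg
  have hX (a : ℝ) (ha : amin ≤ a) (ha' : a ≤ amax) : IsBanachENorm (N a) :=
    ⟨fun x => htop x ▸ hmono a amax ha ha' le_rfl x, hadd a ha ha', hsmul a ha ha',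
      hcomplete a ha ha'⟩
  have Xα := hX α hα (hαβ.le.trans hβ)
  have Xβ := hX β (hα.trans hαβ.le) hβ
  obtain ⟨u, hu, hfu⟩ := Xα.scaleContOn_iff.1 hf
  obtain ⟨v, hv, hgv⟩ := Xα.scaleContOn_iff.1 hg
  set Φ := Xα.restrictMap Xβ F (hFmap α β hα hαβ hβ)
  have hΦ : LipschitzWith (L / (β - α) ^ q).toNNReal Φ :=
    Xα.lipschitzWith_restrictMap Xβ _ (hFlip α β hα hαβ hβ)
  have hx₀β : N β x₀ ≠ ⊤ := ne_top_of_le_ne_top hx₀ (hmono amin β le_rfl (hα.trans hαβ.le) hβ x₀)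
  have hIf := Xα.coe_integralMap_eqOn_imap Xβ _ hΦ.continuous hx₀β hu hfu
  have hIg := Xα.coe_integralMap_eqOn_imap Xβ _ hΦ.continuous hx₀β hv hgv
  refine ⟨Xβ.scaleContOn_iff.2 ⟨_, continuousOn_integralMap hΦ.continuous hu _, hIf⟩, ?_⟩
  calc ⨆ t ∈ Icc 0 T, N β (Imap F x₀ f t - Imap F x₀ g t)
      = ⨆ t ∈ Icc 0 T, edist (integralMap Φ ⟨x₀, hx₀β⟩ u t) (integralMap Φ ⟨x₀, hx₀β⟩ v t) :=
        biSup_congr fun t ht => by rw [Xβ.edist_eq, ← hIf ht, ← hIg ht]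
    _ ≤ (L / (β - α) ^ q).toNNReal * ENNReal.ofReal T * ⨆ t ∈ Icc 0 T, edist (u t) (v t) :=
        iSup_edist_integralMap_le hΦ hu hv _
    _ = ENNReal.ofReal (L * T / (β - α) ^ q) * ⨆ t ∈ Icc 0 T, N α (f t - g t) := by
        have hS : ⨆ t ∈ Icc 0 T, edist (u t) (v t) = ⨆ t ∈ Icc 0 T, N α (f t - g t) :=
          biSup_congr fun t ht => by rw [Xα.edist_eq, ← hfu ht, ← hgv ht]
        rw [hS, mul_div_right_comm, ENNReal.ofReal_mul' hT.le]
        rfl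

theorem statement10
    -- the scale of Banach spaces, realised inside the ambient space `E = X_{amax}`
    (E : Type*) [NormedAddCommGroup E] [NormedSpace ℝ E] [CompleteSpace E]
    (amin amax : ℝ) (hamin : 0 < amin) (hminmax : amin < amax)
    (N : ℝ → E → ℝ≥0∞)
    (htop : ∀ x : E, N amax x = (‖x‖₊ : ℝ≥0∞))
    (hmono : ∀ a b : ℝ, amin ≤ a → a ≤ b → b ≤ amax → ∀ x : E, N b x ≤ N a x)
    (hzero : ∀ a : ℝ, amin ≤ a → a ≤ amax → N a 0 = 0)
    (hadd : ∀ a : ℝ, amin ≤ a → a ≤ amax → ∀ x y : E, N a (x + y) ≤ N a x + N a y)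
    (hsmul : ∀ a : ℝ, amin ≤ a → a ≤ amax → ∀ (c : ℝ) (x : E),
      N a (c • x) = (‖c‖₊ : ℝ≥0∞) * N a x)
    (hcomplete : ∀ a : ℝ, amin ≤ a → a ≤ amax → ∀ u : ℕ → E,
      (∀ n, N a (u n) ≠ ⊤) →
      (∀ ε : ℝ≥0∞, 0 < ε → ∃ K : ℕ, ∀ m ≥ K, ∀ n ≥ K, N a (u m - u n) < ε) →
      ∃ x : E, N a x ≠ ⊤ ∧ Tendsto (fun n => N a (u n - x)) atTop (nhds 0))
    -- the Ovsjannikov map `F` of order `q` and constant `L`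
    (q L : ℝ) (hq : 0 ≤ q) (hL : 0 < L) (F : E → E)
    (hFmap : ∀ a b : ℝ, amin ≤ a → a < b → b ≤ amax → ∀ x : E,
      N a x ≠ ⊤ → N b (F x) ≠ ⊤)
    (hFlip : ∀ a b : ℝ, amin ≤ a → a < b → b ≤ amax → ∀ x y : E,
      N a x ≠ ⊤ → N a y ≠ ⊤ →
      N b (F x - F y) ≤ ENNReal.ofReal (L / (b - a) ^ q) * N a (x - y))
    (T : ℝ) (hT : 0 < T) (x₀ : E) (hx₀ : N amin x₀ ≠ ⊤) :
    ∀ α β : ℝ, amin ≤ α → α < β → β ≤ amax →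
      ∀ f g : ℝ → E, ScaleContOn N α T f → ScaleContOn N α T g →
        ScaleContOn N β T (Imap F x₀ f) ∧
        (⨆ t ∈ Icc (0 : ℝ) T, N β (Imap F x₀ f t - Imap F x₀ g t)) ≤
          ENNReal.ofReal (L * T / (β - α) ^ q) *
            ⨆ t ∈ Icc (0 : ℝ) T, N α (f t - g t) :=
  statement10_general E amin amax N htop hmono hadd hsmul hcomplete q L F hFmap hFlip T hT x₀ hx₀
end
end

section
/- Let {X_𝔞}_{𝔞∈[𝔞₋,𝔞₊]} be a scale of Banach spaces, F an Ovsjannikov map of order q ≥ 0 and constant L > 0, T > 0, x₀ ∈ X_{𝔞₋}, and ℐ(f)(t) = x₀ + ∫₀ᵗ F(f(s)) ds. Then for all 𝔞₋ < α < β < 𝔞₊, all continuous f, g : [0,T] → X_{𝔞₋}, and all n ∈ ℕ, sup_{t∈[0,T]} ‖ℐⁿ(f)(t) − ℐ^{n+1}(g)(t)‖_{X_β} ≤ (LⁿTⁿ n^{qn} / ((β−α)^{qn} n!)) · sup_{t∈[0,T]} ‖f(t) − ℐ(g)(t)‖_{X_α}. -/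
/-!
The level `X_a` of the scale is realised as the Banach space `IsCompleteENorm.FinitePart` of the
extended norm `N a`. A function that is continuous into `X_a` has the same integral there as in
the ambient space `E`, so `N a (∫ h) ≤ ∫ N a ∘ h` holds although `N a` need not be lower
semicontinuous on `E`. Combined with the Ovsjannikov bound, one application of `ℐ` costs a step
`ε` in the scale index and turns a bound `c ^ k t ^ k / k!` into `c ^ (k + 1) t ^ (k + 1) / (k + 1)!`
with `c = L / ε ^ q`. Cutting `[α, β]` into `n` steps of length `(β - α) / n` gives the estimate.
-/

open MeasureTheory Set Filter ENNReal

noncomputable section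

section BanachScale

variable {E : Type*} [NormedAddCommGroup E]

structure IsOvsjannikov (N : ℝ → E → ℝ≥0∞) (amin amax q L : ℝ) (F : E → E) : Prop where
  mapsTo : ∀ a b, amin ≤ a → a < b → b ≤ amax → ∀ x, N a x ≠ ⊤ → N b (F x) ≠ ⊤
  apply_sub_le : ∀ a b, amin ≤ a → a < b → b ≤ amax → ∀ x y, N a x ≠ ⊤ → N a y ≠ ⊤ →
    N b (F x - F y) ≤ ENNReal.ofReal (L / (b - a) ^ q) * N a (x - y)

theorem ScaleContOn.comp {N : ℝ → E → ℝ≥0∞} {amin amax q L a b T : ℝ} {F : E → E}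
    {f : ℝ → E} (hF : IsOvsjannikov N amin amax q L F) (ha : amin ≤ a) (hab : a < b)
    (hb : b ≤ amax) (hf : ScaleContOn N a T f) : ScaleContOn N b T (fun s => F (f s)) := by
  refine ⟨fun t ht => hF.mapsTo a b ha hab hb _ (hf.1 t ht), fun t₀ ht₀ => ?_⟩
  have hlim := ENNReal.Tendsto.const_mul (hf.2 t₀ ht₀)
    (Or.inr (ENNReal.ofReal_ne_top (r := L / (b - a) ^ q)))
  rw [mul_zero] at hlim
  refine tendsto_of_tendsto_of_tendsto_of_le_of_le' tendsto_const_nhds hlim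
    (Eventually.of_forall fun _ => zero_le) ?_
  filter_upwards [self_mem_nhdsWithin] with t ht
  exact hF.apply_sub_le a b ha hab hb _ _ (hf.1 t ht) (hf.1 t₀ ht₀)

variable [NormedSpace ℝ E]

structure IsCompleteENorm (ν : E → ℝ≥0∞) : Prop where
  apply_zero : ν 0 = 0
  add_le : ∀ x y, ν (x + y) ≤ ν x + ν y
  smul : ∀ (c : ℝ) (x : E), ν (c • x) = (‖c‖₊ : ℝ≥0∞) * ν x
  nnnorm_le : ∀ x, (‖x‖₊ : ℝ≥0∞) ≤ ν x
  complete : ∀ u : ℕ → E, (∀ n, ν (u n) ≠ ⊤) →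
    (∀ ε : ℝ≥0∞, 0 < ε → ∃ K : ℕ, ∀ m ≥ K, ∀ n ≥ K, ν (u m - u n) < ε) →
    ∃ x : E, ν x ≠ ⊤ ∧ Tendsto (fun n => ν (u n - x)) atTop (nhds 0)

namespace IsCompleteENorm

variable {ν : E → ℝ≥0∞} (hν : IsCompleteENorm ν)

def finiteSubmodule : Submodule ℝ E where
  carrier := {x | ν x ≠ ⊤}
  zero_mem' := by simp [hν.apply_zero]
  add_mem' {x y} hx hy :=
    ((hν.add_le x y).trans_lt (ENNReal.add_lt_top.2 ⟨hx.lt_top, hy.lt_top⟩)).ne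
  smul_mem' c x hx := by simp [hν.smul, ENNReal.mul_eq_top, hx.lt_top.ne]

/-- The Banach space `{x | ν x < ⊤}` normed by `ν`; as a type synonym of the submodule it
does not inherit the norm of `E`. -/
def FinitePart : Type _ := hν.finiteSubmodule

instance : AddCommGroup hν.FinitePart := inferInstanceAs (AddCommGroup hν.finiteSubmodule)

instance : Module ℝ hν.FinitePart := inferInstanceAs (Module ℝ hν.finiteSubmodule)

def subtype : hν.FinitePart →ₗ[ℝ] E := hν.finiteSubmodule.subtype

theorem apply_subtype_ne_top (x : hν.FinitePart) : ν (hν.subtype x) ≠ ⊤ :=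
  (x : hν.finiteSubmodule).2

instance : Norm hν.FinitePart := ⟨fun x => (ν (hν.subtype x)).toReal⟩

theorem normedSpaceCore : NormedSpace.Core ℝ hν.FinitePart where
  norm_nonneg _ := ENNReal.toReal_nonneg
  norm_smul c x := by
    change (ν (hν.subtype (c • x))).toReal = ‖c‖ * (ν (hν.subtype x)).toReal
    rw [map_smul, hν.smul, ENNReal.toReal_mul]
    rfl
  norm_triangle x y := by
    change (ν (hν.subtype (x + y))).toReal ≤
      (ν (hν.subtype x)).toReal + (ν (hν.subtype y)).toReal
    have hx := hν.apply_subtype_ne_top x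
    have hy := hν.apply_subtype_ne_top y
    rw [map_add, ← ENNReal.toReal_add hx hy]
    exact ENNReal.toReal_mono (ENNReal.add_ne_top.2 ⟨hx, hy⟩) (hν.add_le _ _)
  norm_eq_zero_iff x := by
    change (ν (hν.subtype x)).toReal = 0 ↔ x = 0
    rw [ENNReal.toReal_eq_zero_iff, or_iff_left (hν.apply_subtype_ne_top x)]
    refine ⟨fun h => ?_, fun h => by rw [h, map_zero, hν.apply_zero]⟩
    have := (hν.nnnorm_le (hν.subtype x)).trans_eq h
    exact hν.finiteSubmodule.injective_subtype
      (by rw [map_zero]; simpa using this : hν.subtype x = hν.subtype 0)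

instance : NormedAddCommGroup hν.FinitePart := .ofCore hν.normedSpaceCore

instance : NormedSpace ℝ hν.FinitePart := .ofCore hν.normedSpaceCore

def subtypeL : hν.FinitePart →L[ℝ] E :=
  hν.subtype.mkContinuous 1 fun x => by
    rw [one_mul, ← ENNReal.ofReal_le_ofReal_iff (norm_nonneg x), _root_.ofReal_norm]
    exact (hν.nnnorm_le _).trans_eq (ENNReal.ofReal_toReal (hν.apply_subtype_ne_top x)).symm

theorem norm_eq (x : hν.FinitePart) : ‖x‖ = (ν (hν.subtypeL x)).toReal := rfl

theorem apply_subtypeL_ne_top (x : hν.FinitePart) : ν (hν.subtypeL x) ≠ ⊤ :=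
  hν.apply_subtype_ne_top x

theorem ofReal_norm (x : hν.FinitePart) : ENNReal.ofReal ‖x‖ = ν (hν.subtypeL x) :=
  ENNReal.ofReal_toReal (hν.apply_subtypeL_ne_top x)

def mkFinite (x : E) (hx : ν x ≠ ⊤) : hν.FinitePart := (⟨x, hx⟩ : hν.finiteSubmodule)

@[simp]
theorem subtypeL_mkFinite (x : E) (hx : ν x ≠ ⊤) : hν.subtypeL (hν.mkFinite x hx) = x := rfl

instance : CompleteSpace hν.FinitePart := by
  refine Metric.complete_of_cauchySeq_tendsto fun u hu => ?_
  have hcauchy : ∀ ε : ℝ≥0∞, 0 < ε → ∃ K : ℕ, ∀ m ≥ K, ∀ n ≥ K,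
      ν (hν.subtypeL (u m) - hν.subtypeL (u n)) < ε := by
    intro ε hε
    obtain ⟨r, -, hr0, hrε⟩ := ENNReal.lt_iff_exists_real_btwn.1 hε
    obtain ⟨K, hK⟩ := Metric.cauchySeq_iff.1 hu r (ENNReal.ofReal_pos.1 hr0)
    refine ⟨K, fun m hm n hn => lt_of_le_of_lt ?_ hrε⟩
    rw [← map_sub, ← hν.ofReal_norm, ← dist_eq_norm]
    exact ENNReal.ofReal_le_ofReal (hK m hm n hn).le
  obtain ⟨x, hx, hlim⟩ := hν.complete (fun n => hν.subtypeL (u n))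
    (fun n => hν.apply_subtypeL_ne_top _) hcauchy
  refine ⟨hν.mkFinite x hx, tendsto_iff_norm_sub_tendsto_zero.2 ?_⟩
  refine ((ENNReal.tendsto_toReal ENNReal.zero_ne_top).comp hlim).congr fun n => ?_
  rw [Function.comp_apply, norm_eq, map_sub, subtypeL_mkFinite]

def lift (f : ℝ → E) (t : ℝ) : hν.FinitePart :=
  if h : ν (f t) = ⊤ then 0 else hν.mkFinite (f t) h

theorem subtypeL_lift {f : ℝ → E} {t : ℝ} (ht : ν (f t) ≠ ⊤) :
    hν.subtypeL (hν.lift f t) = f t := by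
  simp [lift, ht]

end IsCompleteENorm

structure IsBanachScale (N : ℝ → E → ℝ≥0∞) (amin amax : ℝ) : Prop where
  isCompleteENorm : ∀ a, amin ≤ a → a ≤ amax → IsCompleteENorm (N a)
  antitone : ∀ a b, amin ≤ a → a ≤ b → b ≤ amax → ∀ x, N b x ≤ N a x

namespace ScaleContOn

variable {N : ℝ → E → ℝ≥0∞} {amin amax q L a b T : ℝ} {F : E → E} {f g : ℝ → E}

theorem continuousOn_lift (hν : IsCompleteENorm (N a)) (hf : ScaleContOn N a T f) :
    ContinuousOn (hν.lift f) (Icc 0 T) := by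
  intro t₀ ht₀
  rw [ContinuousWithinAt, tendsto_iff_norm_sub_tendsto_zero]
  refine ((ENNReal.tendsto_toReal ENNReal.zero_ne_top).comp (hf.2 t₀ ht₀)).congr' ?_
  filter_upwards [self_mem_nhdsWithin] with t ht
  rw [Function.comp_apply, hν.norm_eq, map_sub, hν.subtypeL_lift (hf.1 t ht),
    hν.subtypeL_lift (hf.1 t₀ ht₀)]

theorem of_continuousOn (hν : IsCompleteENorm (N a)) {g : ℝ → hν.FinitePart}
    (hg : ContinuousOn g (Icc 0 T)) (hgf : ∀ t ∈ Icc 0 T, hν.subtypeL (g t) = f t) :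
    ScaleContOn N a T f := by
  refine ⟨fun t ht => hgf t ht ▸ hν.apply_subtypeL_ne_top _, fun t₀ ht₀ => ?_⟩
  have hlim := ENNReal.tendsto_ofReal (tendsto_iff_norm_sub_tendsto_zero.1 (hg t₀ ht₀))
  rw [ENNReal.ofReal_zero] at hlim
  refine hlim.congr' ?_
  filter_upwards [self_mem_nhdsWithin] with t ht
  rw [hν.ofReal_norm, map_sub, hgf t ht, hgf t₀ ht₀]

theorem anti (hN : IsBanachScale N amin amax) (ha : amin ≤ a) (hab : a ≤ b) (hb : b ≤ amax)
    (hf : ScaleContOn N a T f) : ScaleContOn N b T f := by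
  refine ⟨fun t ht => ((hN.antitone a b ha hab hb _).trans_lt (hf.1 t ht).lt_top).ne,
    fun t₀ ht₀ => ?_⟩
  exact tendsto_of_tendsto_of_tendsto_of_le_of_le tendsto_const_nhds (hf.2 t₀ ht₀)
    (fun _ => zero_le) fun _ => hN.antitone a b ha hab hb _

variable [CompleteSpace E] {x₀ : E}

theorem integral_eq_subtypeL_integral_lift (hν : IsCompleteENorm (N a))
    (hf : ScaleContOn N a T f) {t : ℝ} (ht : t ∈ Icc 0 T) :
    ∫ s in (0 : ℝ)..t, f s = hν.subtypeL (∫ s in (0 : ℝ)..t, hν.lift f s) := by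
  have hsub : uIcc 0 t ⊆ Icc 0 T := by
    rw [uIcc_of_le ht.1]
    exact Icc_subset_Icc le_rfl ht.2
  rw [← hν.subtypeL.intervalIntegral_comp_comm
    ((hf.continuousOn_lift hν).mono hsub).intervalIntegrable]
  exact intervalIntegral.integral_congr fun s hs => (hν.subtypeL_lift (hf.1 s (hsub hs))).symm

theorem imap (hN : IsBanachScale N amin amax) (hF : IsOvsjannikov N amin amax q L F)
    (hT : 0 ≤ T) (ha : amin ≤ a) (hab : a < b) (hb : b ≤ amax) (hx₀ : N b x₀ ≠ ⊤)
    (hf : ScaleContOn N a T f) : ScaleContOn N b T (Imap F x₀ f) := by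
  have hν := hN.isCompleteENorm b (ha.trans hab.le) hb
  have hFf := hf.comp hF ha hab hb
  have hint : IntervalIntegrable (hν.lift fun s => F (f s)) volume 0 T :=
    (hFf.continuousOn_lift hν).intervalIntegrable_of_Icc hT
  refine of_continuousOn hν (g := fun t => hν.mkFinite x₀ hx₀ + ∫ s in (0 : ℝ)..t,
    hν.lift (fun s => F (f s)) s) ?_ fun t ht => ?_
  · exact continuousOn_const.add
      ((intervalIntegral.continuousOn_primitive_interval' hint left_mem_uIcc).mono
        Icc_subset_uIcc)
  · rw [map_add, IsCompleteENorm.subtypeL_mkFinite,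
      ← hFf.integral_eq_subtypeL_integral_lift hν ht]
    rfl

theorem iterate_imap (hN : IsBanachScale N amin amax) (hF : IsOvsjannikov N amin amax q L F)
    (hT : 0 ≤ T) (hx₀ : N amin x₀ ≠ ⊤) (hf : ScaleContOn N amin T f) (k : ℕ) {γ : ℝ}
    (hγ : amin < γ) (hγ' : γ ≤ amax) : ScaleContOn N γ T ((Imap F x₀)^[k] f) := by
  induction k generalizing γ with
  | zero => exact hf.anti hN le_rfl hγ.le hγ'
  | succ k ih =>
    rw [Function.iterate_succ']
    have hx₀γ : N γ x₀ ≠ ⊤ := ((hN.antitone amin γ le_rfl hγ.le hγ' x₀).trans_lt hx₀.lt_top).ne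
    exact (ih (γ := (amin + γ) / 2) (by linarith) (by linarith)).imap hN hF hT (by linarith)
      (by linarith) hγ' hx₀γ

theorem apply_imap_sub_imap_le (hN : IsBanachScale N amin amax)
    (hF : IsOvsjannikov N amin amax q L F) (hL : 0 ≤ L) (ha : amin ≤ a) (hab : a < b)
    (hb : b ≤ amax) (hf : ScaleContOn N a T f) (hg : ScaleContOn N a T g) {φ : ℝ → ℝ}
    (hφ : ∀ s ∈ Icc 0 T, N a (f s - g s) ≤ ENNReal.ofReal (φ s))
    (hφ0 : ∀ s ∈ Icc 0 T, 0 ≤ φ s) {t : ℝ} (ht : t ∈ Icc 0 T)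
    (hφi : IntervalIntegrable φ volume 0 t) :
    N b (Imap F x₀ f t - Imap F x₀ g t) ≤
      ENNReal.ofReal (L / (b - a) ^ q * ∫ s in (0 : ℝ)..t, φ s) := by
  have hν := hN.isCompleteENorm b (ha.trans hab.le) hb
  have hFf := hf.comp hF ha hab hb
  have hFg := hg.comp hF ha hab hb
  have hC : 0 ≤ L / (b - a) ^ q := div_nonneg hL (Real.rpow_nonneg (by linarith) q)
  have hsub : uIcc 0 t ⊆ Icc 0 T := by
    rw [uIcc_of_le ht.1]
    exact Icc_subset_Icc le_rfl ht.2
  have hdiff : Imap F x₀ f t - Imap F x₀ g t = hν.subtypeL (∫ s in (0 : ℝ)..t,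
      (hν.lift (fun s => F (f s)) s - hν.lift (fun s => F (g s)) s)) := by
    rw [intervalIntegral.integral_sub (((hFf.continuousOn_lift hν).mono hsub).intervalIntegrable)
      (((hFg.continuousOn_lift hν).mono hsub).intervalIntegrable), map_sub,
      ← hFf.integral_eq_subtypeL_integral_lift hν ht,
      ← hFg.integral_eq_subtypeL_integral_lift hν ht]
    exact add_sub_add_left_eq_sub _ _ _
  rw [hdiff, ← hν.ofReal_norm, ← intervalIntegral.integral_const_mul]
  refine ENNReal.ofReal_le_ofReal (intervalIntegral.norm_integral_le_of_norm_le ht.1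
    (Eventually.of_forall fun s hs => ?_) (hφi.const_mul _))
  have hs : s ∈ Icc 0 T := hsub (Ioc_subset_Icc_self.trans Icc_subset_uIcc hs)
  rw [← ENNReal.ofReal_le_ofReal_iff (mul_nonneg hC (hφ0 s hs)), hν.ofReal_norm, map_sub,
    hν.subtypeL_lift (hFf.1 s hs), hν.subtypeL_lift (hFg.1 s hs), ENNReal.ofReal_mul hC]
  exact (hF.apply_sub_le a b ha hab hb _ _ (hf.1 s hs) (hg.1 s hs)).trans
    (mul_le_mul_right (hφ s hs) _)

end ScaleContOn

theorem integral_pow_div_factorial (t : ℝ) (k : ℕ) :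
    ∫ s in (0 : ℝ)..t, s ^ k / (k.factorial : ℝ) = t ^ (k + 1) / ((k + 1).factorial : ℝ) := by
  rw [intervalIntegral.integral_div, integral_pow, Nat.factorial_succ]
  push_cast
  field_simp
  ring

namespace ScaleContOn

variable [CompleteSpace E] {N : ℝ → E → ℝ≥0∞} {amin amax q L T α ε : ℝ} {F : E → E}
  {f g : ℝ → E} {x₀ : E}

theorem apply_iterate_imap_sub_le (hN : IsBanachScale N amin amax)
    (hF : IsOvsjannikov N amin amax q L F) (hL : 0 ≤ L) (hT : 0 ≤ T) (hx₀ : N amin x₀ ≠ ⊤)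
    (hf : ScaleContOn N amin T f) (hg : ScaleContOn N amin T g) (hα : amin < α)
    (hε : 0 < ε) {M : ℝ} (hM0 : 0 ≤ M)
    (hM : ∀ t ∈ Icc 0 T, N α (f t - Imap F x₀ g t) ≤ ENNReal.ofReal M) (k : ℕ)
    (hk : α + k * ε ≤ amax) {t : ℝ} (ht : t ∈ Icc 0 T) :
    N (α + k * ε) ((Imap F x₀)^[k] f t - (Imap F x₀)^[k + 1] g t) ≤
      ENNReal.ofReal ((L / ε ^ q) ^ k * M * (t ^ k / k.factorial)) := by
  induction k generalizing t with
  | zero => simpa using hM t ht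
  | succ k ih =>
    have hc : 0 ≤ L / ε ^ q := div_nonneg hL (Real.rpow_nonneg hε.le q)
    have hkε : 0 ≤ k * ε := by positivity
    have hk' : α + k * ε ≤ amax := by push_cast at hk; linarith
    have hstep : α + (k + 1 : ℕ) * ε - (α + k * ε) = ε := by push_cast; ring
    rw [Function.iterate_succ_apply', Function.iterate_succ_apply']
    refine (apply_imap_sub_imap_le hN hF hL (by linarith) (by push_cast; linarith) hk
      (hf.iterate_imap hN hF hT hx₀ k (by linarith) hk')
      (hg.iterate_imap hN hF hT hx₀ (k + 1) (by linarith) hk')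
      (fun s hs => ih hk' hs) (fun s hs => by have := hs.1; positivity) ht
      ((by fun_prop : Continuous _).intervalIntegrable _ _)).trans_eq ?_
    rw [hstep, intervalIntegral.integral_const_mul, integral_pow_div_factorial]
    congr 1
    ring

theorem iSup_apply_iterate_imap_sub_le (hN : IsBanachScale N amin amax)
    (hF : IsOvsjannikov N amin amax q L F) (hL : 0 < L) (hT : 0 < T) (hx₀ : N amin x₀ ≠ ⊤)
    (hf : ScaleContOn N amin T f) (hg : ScaleContOn N amin T g) (hα : amin < α)
    (hε : 0 < ε) (n : ℕ) (hn : α + n * ε ≤ amax) :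
    ⨆ t ∈ Icc (0 : ℝ) T, N (α + n * ε) ((Imap F x₀)^[n] f t - (Imap F x₀)^[n + 1] g t) ≤
      ENNReal.ofReal ((L / ε ^ q) ^ n * T ^ n / n.factorial) *
        ⨆ t ∈ Icc (0 : ℝ) T, N α (f t - Imap F x₀ g t) := by
  set M := ⨆ t ∈ Icc (0 : ℝ) T, N α (f t - Imap F x₀ g t)
  have hc : 0 < (L / ε ^ q) ^ n := pow_pos (div_pos hL (Real.rpow_pos_of_pos hε q)) n
  have hC : 0 < (L / ε ^ q) ^ n * T ^ n / n.factorial :=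
    div_pos (mul_pos hc (pow_pos hT n)) (Nat.cast_pos.2 n.factorial_pos)
  rcases eq_or_ne M ⊤ with hM | hM
  · rw [hM, ENNReal.mul_top (ENNReal.ofReal_pos.2 hC).ne']
    exact le_top
  refine iSup₂_le fun t ht => (hf.apply_iterate_imap_sub_le hN hF hL.le hT.le hx₀ hg hα hε
    ENNReal.toReal_nonneg (fun t ht => (le_iSup₂ (f := fun t _ => N α (f t - Imap F x₀ g t))
      t ht).trans_eq (ENNReal.ofReal_toReal hM).symm) n hn ht).trans ?_
  conv_rhs => rw [← ENNReal.ofReal_toReal hM, ← ENNReal.ofReal_mul hC.le]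
  refine ENNReal.ofReal_le_ofReal (le_of_le_of_eq
    (b := (L / ε ^ q) ^ n * M.toReal * (T ^ n / n.factorial)) ?_ (by ring))
  gcongr
  exacts [ht.1, ht.2]

end ScaleContOn

theorem div_div_rpow_pow_mul_pow_div_factorial (L T d q : ℝ) (n : ℕ) (hd : 0 ≤ d) :
    (L / (d / n) ^ q) ^ n * T ^ n / n.factorial =
      L ^ n * T ^ n * (n : ℝ) ^ (q * n) / (d ^ (q * n) * n.factorial) := by
  rw [div_pow, ← Real.rpow_natCast ((d / n) ^ q), ← Real.rpow_mul (div_nonneg hd n.cast_nonneg),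
    Real.div_rpow hd n.cast_nonneg, div_div_eq_mul_div]
  ring

end BanachScale

theorem statement12_general
    -- the scale of Banach spaces, realised inside the ambient space `E = X_{amax}`
    (E : Type*) [NormedAddCommGroup E] [NormedSpace ℝ E] [CompleteSpace E]
    (amin amax : ℝ)
    (N : ℝ → E → ℝ≥0∞)
    (htop : ∀ x : E, N amax x = (‖x‖₊ : ℝ≥0∞))
    (hmono : ∀ a b : ℝ, amin ≤ a → a ≤ b → b ≤ amax → ∀ x : E, N b x ≤ N a x)
    (hzero : ∀ a : ℝ, amin ≤ a → a ≤ amax → N a 0 = 0)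
    (hadd : ∀ a : ℝ, amin ≤ a → a ≤ amax → ∀ x y : E, N a (x + y) ≤ N a x + N a y)
    (hsmul : ∀ a : ℝ, amin ≤ a → a ≤ amax → ∀ (c : ℝ) (x : E),
      N a (c • x) = (‖c‖₊ : ℝ≥0∞) * N a x)
    (hcomplete : ∀ a : ℝ, amin ≤ a → a ≤ amax → ∀ u : ℕ → E,
      (∀ n, N a (u n) ≠ ⊤) →
      (∀ ε : ℝ≥0∞, 0 < ε → ∃ K : ℕ, ∀ m ≥ K, ∀ n ≥ K, N a (u m - u n) < ε) →
      ∃ x : E, N a x ≠ ⊤ ∧ Tendsto (fun n => N a (u n - x)) atTop (nhds 0))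
    -- the Ovsjannikov map `F` of order `q` and constant `L`
    (q L : ℝ) (hL : 0 < L) (F : E → E)
    (hFmap : ∀ a b : ℝ, amin ≤ a → a < b → b ≤ amax → ∀ x : E,
      N a x ≠ ⊤ → N b (F x) ≠ ⊤)
    (hFlip : ∀ a b : ℝ, amin ≤ a → a < b → b ≤ amax → ∀ x y : E,
      N a x ≠ ⊤ → N a y ≠ ⊤ →
      N b (F x - F y) ≤ ENNReal.ofReal (L / (b - a) ^ q) * N a (x - y))
    (T : ℝ) (hT : 0 < T) (x₀ : E) (hx₀ : N amin x₀ ≠ ⊤)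
    :
    ∀ α β : ℝ, amin < α → α < β → β < amax →
      ∀ f g : ℝ → E, ScaleContOn N amin T f → ScaleContOn N amin T g →
        ∀ n : ℕ,
          (⨆ t ∈ Icc (0 : ℝ) T,
              N β ((Imap F x₀)^[n] f t - (Imap F x₀)^[n + 1] g t)) ≤
            ENNReal.ofReal
                (L ^ n * T ^ n * (n : ℝ) ^ (q * n) /
                  ((β - α) ^ (q * n) * (n.factorial : ℝ))) *
              ⨆ t ∈ Icc (0 : ℝ) T, N α (f t - Imap F x₀ g t) := by
  intro α β hα hαβ hβ f g hf hg n
  have hN : IsBanachScale N amin amax :=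
    ⟨fun a ha ha' => ⟨hzero a ha ha', hadd a ha ha', hsmul a ha ha',
      fun x => htop x ▸ hmono a amax ha ha' le_rfl x, hcomplete a ha ha'⟩, hmono⟩
  have hF : IsOvsjannikov N amin amax q L F := ⟨hFmap, hFlip⟩
  rcases Nat.eq_zero_or_pos n with rfl | hn
  · simp only [Function.iterate_zero, id_eq, zero_add, Function.iterate_one, pow_zero,
      Nat.cast_zero, mul_zero, Real.rpow_zero, Nat.factorial_zero, Nat.cast_one, mul_one,
      div_one, ENNReal.ofReal_one, one_mul]
    exact iSup₂_mono fun t _ => hmono α β hα.le hαβ.le hβ.le _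
  have hε : 0 < (β - α) / n := div_pos (sub_pos.2 hαβ) (Nat.cast_pos.2 hn)
  have hlevel : α + n * ((β - α) / n) = β := by
    field_simp
    ring
  have key := hf.iSup_apply_iterate_imap_sub_le hN hF hL hT hx₀ hg hα hε n
    (by rw [hlevel]; exact hβ.le)
  rwa [hlevel, div_div_rpow_pow_mul_pow_div_factorial L T _ q n (sub_pos.2 hαβ).le] at key

theorem statement12
    -- the scale of Banach spaces, realised inside the ambient space `E = X_{amax}`
    (E : Type*) [NormedAddCommGroup E] [NormedSpace ℝ E] [CompleteSpace E]
    (amin amax : ℝ) (hamin : 0 < amin) (hminmax : amin < amax)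
    (N : ℝ → E → ℝ≥0∞)
    (htop : ∀ x : E, N amax x = (‖x‖₊ : ℝ≥0∞))
    (hmono : ∀ a b : ℝ, amin ≤ a → a ≤ b → b ≤ amax → ∀ x : E, N b x ≤ N a x)
    (hzero : ∀ a : ℝ, amin ≤ a → a ≤ amax → N a 0 = 0)
    (hadd : ∀ a : ℝ, amin ≤ a → a ≤ amax → ∀ x y : E, N a (x + y) ≤ N a x + N a y)
    (hsmul : ∀ a : ℝ, amin ≤ a → a ≤ amax → ∀ (c : ℝ) (x : E),
      N a (c • x) = (‖c‖₊ : ℝ≥0∞) * N a x)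
    (hcomplete : ∀ a : ℝ, amin ≤ a → a ≤ amax → ∀ u : ℕ → E,
      (∀ n, N a (u n) ≠ ⊤) →
      (∀ ε : ℝ≥0∞, 0 < ε → ∃ K : ℕ, ∀ m ≥ K, ∀ n ≥ K, N a (u m - u n) < ε) →
      ∃ x : E, N a x ≠ ⊤ ∧ Tendsto (fun n => N a (u n - x)) atTop (nhds 0))
    -- the Ovsjannikov map `F` of order `q` and constant `L`
    (q L : ℝ) (hq : 0 ≤ q) (hL : 0 < L) (F : E → E)
    (hFmap : ∀ a b : ℝ, amin ≤ a → a < b → b ≤ amax → ∀ x : E,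
      N a x ≠ ⊤ → N b (F x) ≠ ⊤)
    (hFlip : ∀ a b : ℝ, amin ≤ a → a < b → b ≤ amax → ∀ x y : E,
      N a x ≠ ⊤ → N a y ≠ ⊤ →
      N b (F x - F y) ≤ ENNReal.ofReal (L / (b - a) ^ q) * N a (x - y))
    (T : ℝ) (hT : 0 < T) (x₀ : E) (hx₀ : N amin x₀ ≠ ⊤)
    :
    ∀ α β : ℝ, amin < α → α < β → β < amax →
      ∀ f g : ℝ → E, ScaleContOn N amin T f → ScaleContOn N amin T g →
        ∀ n : ℕ,
          (⨆ t ∈ Icc (0 : ℝ) T,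
              N β ((Imap F x₀)^[n] f t - (Imap F x₀)^[n + 1] g t)) ≤
            ENNReal.ofReal
                (L ^ n * T ^ n * (n : ℝ) ^ (q * n) /
                  ((β - α) ^ (q * n) * (n.factorial : ℝ))) *
              ⨆ t ∈ Icc (0 : ℝ) T, N α (f t - Imap F x₀ g t) :=
  statement12_general E amin amax N htop hmono hzero hadd hsmul hcomplete q L hL F hFmap hFlip T hT
    x₀ hx₀
end
end

section
/- Comparison theorem. Let γ ⊂ ℝ^d be locally finite, let 0 < 𝔞₋ < 𝔞₊, let T > 0, let z ∈ l¹_{𝔞₋}, and let Q = (Q_{x,y})_{x,y∈γ} be a matrix with Q_{x,y} ≥ 0 for all x, y, such that the map z ↦ Qz, (Qz)_x = ∑_{y∈γ} Q_{x,y} z_y, is an Ovsjannikov map of order q < 1 and constant L > 0 on the scale {l¹_𝔞}_{𝔞∈[𝔞₋,𝔞₊]}. Let f be the unique solution of f(t) = z + ∫₀ᵗ Q(f(s)) ds that is continuous from [0,T] into l¹_𝔞 for every 𝔞 ∈ (𝔞₋, 𝔞₊). Suppose g : [0,T] → l¹_{𝔞₋} is continuous and satisfies, for every x ∈ γ and t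 ∈ [0,T], g_x(t) ≤ z_x + ∑_{y∈γ} Q_{x,y} ∫₀ᵗ g_y(s) ds. Then g_x(t) ≤ f_x(t) for all x ∈ γ and all t ∈ [0,T]. -/
/-!
Let `u = (g - f)⁺`. Subtracting the equation for `f` from the inequality for `g` and using
`Q ≥ 0` gives `u(t) ≤ Q ∫₀ᵗ u` coordinatewise, while `‖u(t)‖_{a₀} ≤ M` on `[0, T]` for some
`a₀ ∈ (𝔞₋, 𝔞₊)`. Iterating the inequality `n` times along the scales
`a₀ < a₀ + Δ/n < ⋯ < 𝔞₊` (`Δ = 𝔞₊ - a₀`), each Ovsjannikov step costs a factor `L (n/Δ)^q` and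
the iterated time integrals produce `t^n / n!`, so `‖u(t)‖_{𝔞₊} ≤ M (L t (n/Δ)^q)^n / n!`.
Since `q < 1` and `n! ≥ (n/e)^n`, this tends to `0`.
-/

open Set Filter Metric MeasureTheory

open scoped Topology Nat

theorem tendsto_mul_rpow_pow_div_factorial {K q : ℝ} (hK : 0 ≤ K) (hq : q < 1) :
    Tendsto (fun n : ℕ => (K * (n : ℝ) ^ q) ^ n / n !) atTop (𝓝 0) := by
  have hlim : Tendsto (fun n : ℕ => K * Real.exp 1 * (n : ℝ) ^ (q - 1)) atTop (𝓝 0) := by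
    simpa [neg_sub] using ((tendsto_rpow_neg_atTop (sub_pos.2 hq)).comp
      tendsto_natCast_atTop_atTop).const_mul (K * Real.exp 1)
  refine squeeze_zero' (Eventually.of_forall fun n => by positivity) ?_
    (tendsto_pow_atTop_nhds_zero_of_lt_one (by norm_num : (0:ℝ) ≤ 1 / 2) (by norm_num))
  filter_upwards [hlim.eventually (ge_mem_nhds (by norm_num : (0:ℝ) < 1 / 2)),
    eventually_ge_atTop 1] with n hsmall hn
  have hn0 : (0:ℝ) < n := by exact_mod_cast hn
  have hfact : ((n : ℝ) / Real.exp 1) ^ n ≤ n ! := by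
    rw [div_pow, ← Real.exp_nat_mul, mul_one, div_le_iff₀ (Real.exp_pos _),
      ← div_le_iff₀' (by positivity)]
    exact Real.pow_div_factorial_le_exp _ hn0.le n
  calc (K * (n : ℝ) ^ q) ^ n / n ! ≤ (K * (n : ℝ) ^ q) ^ n / ((n : ℝ) / Real.exp 1) ^ n := by
        gcongr
    _ = (K * Real.exp 1 * (n : ℝ) ^ (q - 1)) ^ n := by
        rw [← div_pow, Real.rpow_sub_one hn0.ne']
        field_simp
    _ ≤ (1 / 2) ^ n := by gcongr

theorem scale_gronwall_iterate {F : ℝ → ℝ → ℝ} {a₀ a₁ T M L q : ℝ} (hL : 0 ≤ L)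
    (hF : ∀ a t, 0 ≤ F a t) (hbase : ∀ t ∈ Icc 0 T, F a₀ t ≤ M)
    (hstep : ∀ α β, a₀ ≤ α → α < β → β ≤ a₁ → ∀ t ∈ Icc 0 T,
      F β t ≤ L / (β - α) ^ q * ∫ s in 0..t, F α s)
    {δ : ℝ} (hδ : 0 < δ) (k : ℕ) (hk : a₀ + k * δ ≤ a₁) :
    ∀ t ∈ Icc 0 T, F (a₀ + k * δ) t ≤ M * (L / δ ^ q) ^ k * t ^ k / k ! := by
  induction k with
  | zero => simpa using hbase
  | succ k ih =>
    intro t ht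
    push_cast at hk ⊢
    have hmono : ∫ s in 0..t, F (a₀ + k * δ) s
        ≤ ∫ s in 0..t, M * (L / δ ^ q) ^ k / k ! * s ^ k := by
      rw [intervalIntegral.integral_of_le ht.1, intervalIntegral.integral_of_le ht.1]
      refine integral_mono_of_nonneg (Eventually.of_forall fun s => hF _ _)
        ((continuous_const.mul (continuous_pow k)).integrableOn_Ioc) ?_
      filter_upwards [ae_restrict_mem measurableSet_Ioc] with s hs
      have := ih (by nlinarith) s ⟨hs.1.le, hs.2.trans ht.2⟩
      rwa [mul_div_right_comm] at this
    calc F (a₀ + (k + 1) * δ) t ≤ L / δ ^ q * ∫ s in 0..t, F (a₀ + k * δ) s := by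
          simpa [add_mul, ← add_assoc] using hstep (a₀ + k * δ) (a₀ + (k + 1) * δ)
            (le_add_of_nonneg_right (by positivity)) (by linarith) hk t ht
      _ ≤ L / δ ^ q * ∫ s in 0..t, M * (L / δ ^ q) ^ k / k ! * s ^ k := by gcongr
      _ = M * (L / δ ^ q) ^ (k + 1) * t ^ (k + 1) / (k + 1)! := by
          rw [intervalIntegral.integral_const_mul, integral_pow, Nat.factorial_succ]
          generalize L / δ ^ q = C
          push_cast
          field_simp
          ring

theorem eq_zero_of_scale_gronwall {F : ℝ → ℝ → ℝ} {a₀ a₁ T M L q : ℝ} (ha : a₀ < a₁)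
    (hL : 0 ≤ L) (hq : q < 1) (hF : ∀ a t, 0 ≤ F a t) (hbase : ∀ t ∈ Icc 0 T, F a₀ t ≤ M)
    (hstep : ∀ α β, a₀ ≤ α → α < β → β ≤ a₁ → ∀ t ∈ Icc 0 T,
      F β t ≤ L / (β - α) ^ q * ∫ s in 0..t, F α s) :
    ∀ t ∈ Icc 0 T, F a₁ t = 0 := by
  intro t ht
  have hΔ : 0 < a₁ - a₀ := sub_pos.2 ha
  have hbound : ∀ n : ℕ, 0 < n →
      F a₁ t ≤ M * ((L * t / (a₁ - a₀) ^ q) * (n : ℝ) ^ q) ^ n / n ! := by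
    intro n hn
    have hn0 : (0:ℝ) < n := by exact_mod_cast hn
    have hend : a₀ + n * ((a₁ - a₀) / n) = a₁ := by field_simp; ring
    have := scale_gronwall_iterate hL hF hbase hstep (div_pos hΔ hn0) n hend.le t ht
    rw [hend, Real.div_rpow hΔ.le hn0.le] at this
    convert this using 2
    field_simp
    ring
  have hlim := (tendsto_mul_rpow_pow_div_factorial
    (K := L * t / (a₁ - a₀) ^ q) (by have := ht.1; positivity) hq).const_mul M
  refine le_antisymm (ge_of_tendsto ?_ ((eventually_gt_atTop 0).mono hbound)) (hF _ _)
  simpa [mul_div_assoc] using hlim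

section WeightedSum

variable {ι : Type*} {c u v : ι → ℝ}

theorem summable_mul_abs_sub (hc : ∀ i, 0 ≤ c i) (hu : Summable fun i => c i * |u i|)
    (hv : Summable fun i => c i * |v i|) : Summable fun i => c i * |u i - v i| :=
  (hu.add hv).of_nonneg_of_le (fun i => mul_nonneg (hc i) (abs_nonneg _))
    fun i => (mul_le_mul_of_nonneg_left (abs_sub _ _) (hc i)).trans_eq (mul_add _ _ _)

theorem tsum_mul_abs_sub_le (hc : ∀ i, 0 ≤ c i) (hu : Summable fun i => c i * |u i|)
    (hv : Summable fun i => c i * |v i|) :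
    ∑' i, c i * |u i - v i| ≤ ∑' i, c i * |u i| + ∑' i, c i * |v i| := by
  rw [← hu.tsum_add hv]
  exact (summable_mul_abs_sub hc hu hv).tsum_le_tsum
    (fun i => (mul_le_mul_of_nonneg_left (abs_sub _ _) (hc i)).trans_eq (mul_add _ _ _))
    (hu.add hv)

theorem abs_tsum_mul_abs_sub_tsum_mul_abs_le (hc : ∀ i, 0 ≤ c i)
    (hu : Summable fun i => c i * |u i|) (hv : Summable fun i => c i * |v i|) :
    |(∑' i, c i * |u i|) - (∑' i, c i * |v i|)| ≤ ∑' i, c i * |u i - v i| := by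
  have key : ∀ {u v : ι → ℝ}, Summable (fun i => c i * |u i|) →
      Summable (fun i => c i * |v i|) →
      ∑' i, c i * |u i| - ∑' i, c i * |v i| ≤ ∑' i, c i * |u i - v i| := by
    intro u v hu hv
    rw [sub_le_iff_le_add', ← hv.tsum_add (summable_mul_abs_sub hc hu hv)]
    refine hu.tsum_le_tsum (fun i => ?_) (hv.add (summable_mul_abs_sub hc hu hv))
    rw [← mul_add]
    exact mul_le_mul_of_nonneg_left (by linarith [abs_sub_abs_le_abs_sub (u i) (v i)]) (hc i)
  refine abs_sub_le_iff.2 ⟨key hu hv, ?_⟩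
  simpa only [abs_sub_comm] using key hv hu

theorem summable_and_tsum_le_of_le {f g : ι → ℝ} (hf : ∀ i, 0 ≤ f i) (hfg : ∀ i, f i ≤ g i)
    {M : ℝ} (h : Summable g ∧ ∑' i, g i ≤ M) : Summable f ∧ ∑' i, f i ≤ M := by
  have hs := h.1.of_nonneg_of_le hf hfg
  exact ⟨hs, (hs.tsum_le_tsum hfg h.1).trans h.2⟩

variable {X : Type*} [TopologicalSpace X] {S : Set X} {h : X → ι → ℝ}

theorem continuousOn_apply_of_tendsto_tsum_mul_abs_sub (hc : ∀ i, 0 ≤ c i)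
    (hsum : ∀ t ∈ S, Summable fun i => c i * |h t i|)
    (hlim : ∀ t₀ ∈ S, Tendsto (fun t => ∑' i, c i * |h t i - h t₀ i|) (𝓝[S] t₀) (𝓝 0))
    {i : ι} (hci : 0 < c i) : ContinuousOn (fun t => h t i) S := by
  intro t₀ ht₀
  rw [ContinuousWithinAt, tendsto_iff_dist_tendsto_zero]
  refine squeeze_zero' (Eventually.of_forall fun t => dist_nonneg) ?_
    (by simpa using (hlim t₀ ht₀).div_const (c i))
  filter_upwards [self_mem_nhdsWithin] with t ht
  rw [Real.dist_eq, le_div_iff₀' hci]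
  exact (summable_mul_abs_sub hc (hsum t ht) (hsum t₀ ht₀)).le_tsum i
    fun j _ => mul_nonneg (hc j) (abs_nonneg _)

theorem continuousOn_tsum_mul_abs_of_tendsto_tsum_mul_abs_sub (hc : ∀ i, 0 ≤ c i)
    (hsum : ∀ t ∈ S, Summable fun i => c i * |h t i|)
    (hlim : ∀ t₀ ∈ S, Tendsto (fun t => ∑' i, c i * |h t i - h t₀ i|) (𝓝[S] t₀) (𝓝 0)) :
    ContinuousOn (fun t => ∑' i, c i * |h t i|) S := by
  intro t₀ ht₀
  rw [ContinuousWithinAt, tendsto_iff_dist_tendsto_zero]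
  refine squeeze_zero' (Eventually.of_forall fun t => dist_nonneg) ?_ (hlim t₀ ht₀)
  filter_upwards [self_mem_nhdsWithin] with t ht
  exact abs_tsum_mul_abs_sub_tsum_mul_abs_le hc (hsum t ht) (hsum t₀ ht₀)

end WeightedSum

section Integral

variable {ι α : Type*} [Countable ι] [MeasurableSpace α] {μ : Measure α} [IsFiniteMeasure μ]

theorem summable_integral_of_tsum_le {F : ι → α → ℝ} (hF : ∀ i a, 0 ≤ F i a)
    (hFm : ∀ i, AEStronglyMeasurable (F i) μ) {M : ℝ}
    (hsum : ∀ᵐ a ∂μ, Summable fun i => F i a) (hM : ∀ᵐ a ∂μ, ∑' i, F i a ≤ M) :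
    Summable fun i => ∫ a, F i a ∂μ := by
  have hfin : ∑' i, ∫⁻ a, ENNReal.ofReal (F i a) ∂μ ≠ ⊤ := by
    rw [← lintegral_tsum fun i => (hFm i).aemeasurable.ennreal_ofReal]
    refine ne_top_of_le_ne_top
      (lintegral_const_lt_top (μ := μ) (ENNReal.ofReal_ne_top (r := M))).ne (lintegral_mono_ae ?_)
    filter_upwards [hsum, hM] with a ha haM
    rw [← ENNReal.ofReal_tsum_of_nonneg (fun i => hF i a) ha]
    exact ENNReal.ofReal_le_ofReal haM
  refine (ENNReal.summable_toReal hfin).congr fun i => ?_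
  rw [integral_eq_lintegral_of_nonneg_ae (Eventually.of_forall (hF i)) (hFm i)]

theorem hasSum_integral_mul_of_tsum_le {c : ι → ℝ} (hc : ∀ i, 0 ≤ c i) {h : α → ι → ℝ}
    (hh : ∀ i, Integrable (fun a => h a i) μ) {M : ℝ}
    (hsum : ∀ᵐ a ∂μ, Summable fun i => c i * |h a i|)
    (hM : ∀ᵐ a ∂μ, ∑' i, c i * |h a i| ≤ M) :
    HasSum (fun i => c i * ∫ a, h a i ∂μ) (∫ a, ∑' i, c i * h a i ∂μ) := by
  have hnorm : ∀ i a, ‖c i * h a i‖ = c i * |h a i| := fun i a => by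
    rw [norm_mul, Real.norm_of_nonneg (hc i), Real.norm_eq_abs]
  have hsummable : Summable fun i => ∫ a, ‖c i * h a i‖ ∂μ := by
    simpa only [hnorm] using summable_integral_of_tsum_le
      (fun i a => mul_nonneg (hc i) (abs_nonneg _))
      (fun i => ((hh i).abs.const_mul (c i)).aestronglyMeasurable) hsum hM
  simpa only [integral_const_mul] using
    hasSum_integral_of_summable_integral_norm (fun i => (hh i).const_mul (c i)) hsummable

theorem hasSum_intervalIntegral_mul_of_tsum_le {c : ι → ℝ} (hc : ∀ i, 0 ≤ c i)
    {h : ℝ → ι → ℝ} {t M : ℝ} (ht : 0 ≤ t) (hh : ∀ i, ContinuousOn (fun s => h s i) (Icc 0 t))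
    (hM : ∀ s ∈ Icc 0 t, (Summable fun i => c i * |h s i|) ∧ ∑' i, c i * |h s i| ≤ M) :
    HasSum (fun i => c i * ∫ s in 0..t, h s i) (∫ s in 0..t, ∑' i, c i * h s i) := by
  have hIcc : ∀ᵐ s ∂(volume.restrict (Ioc (0 : ℝ) t)), s ∈ Icc 0 t :=
    (ae_restrict_mem measurableSet_Ioc).mono fun s hs => Ioc_subset_Icc_self hs
  simp only [intervalIntegral.integral_of_le ht]
  exact hasSum_integral_mul_of_tsum_le hc
    (fun i => (hh i).integrableOn_Icc.mono_set Ioc_subset_Icc_self)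
    (hIcc.mono fun s hs => (hM s hs).1) (hIcc.mono fun s hs => (hM s hs).2)

end Integral

section Ovsjannikov

variable {ι : Type*}

/-- The Ovsjannikov property of `v ↦ Qv`, `(Qv)ₓ = ∑' y, Q x y * v y`, on the scale of weighted
ℓ¹ spaces `{v | ∑' x, w a x * |v x| < ∞}`, `a ∈ [amin, amax]`. -/
def IsOvsjannikovMap (w : ℝ → ι → ℝ) (Q : ι → ι → ℝ) (amin amax q L : ℝ) : Prop :=
  ∀ α β : ℝ, amin ≤ α → α < β → β ≤ amax → ∀ v : ι → ℝ,
    (Summable fun x => w α x * |v x|) →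
    (∀ x, Summable fun y => Q x y * v y) ∧
    (Summable fun x => w β x * |∑' y, Q x y * v y|) ∧
    ∑' x, w β x * |∑' y, Q x y * v y| ≤ L / (β - α) ^ q * ∑' x, w α x * |v x|

variable {w : ℝ → ι → ℝ} {Q : ι → ι → ℝ} {amin amax q L : ℝ}

theorem IsOvsjannikovMap.tsum_mul_abs_le (hQ : IsOvsjannikovMap w Q amin amax q L)
    (hw : ∀ a i, 0 < w a i) (hQpos : ∀ x y, 0 ≤ Q x y) (hL : 0 ≤ L) {α β : ℝ}
    (hα : amin ≤ α) (hαβ : α < β) (hβ : β ≤ amax) {v : ι → ℝ} {M : ℝ}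
    (hv : (Summable fun y => w α y * |v y|) ∧ ∑' y, w α y * |v y| ≤ M) (x : ι) :
    (Summable fun y => Q x y * |v y|) ∧
      ∑' y, Q x y * |v y| ≤ (w β x)⁻¹ * (L / (β - α) ^ q * M) := by
  obtain ⟨hsum, hsumβ, hle⟩ :=
    hQ α β hα hαβ hβ (fun y => |v y|) (by simpa only [abs_abs] using hv.1)
  refine ⟨hsum x, (le_inv_mul_iff₀ (hw β x)).2 ?_⟩
  have hQv : 0 ≤ ∑' y, Q x y * |v y| :=
    tsum_nonneg fun y => mul_nonneg (hQpos x y) (abs_nonneg _)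
  calc w β x * ∑' y, Q x y * |v y| = w β x * |(∑' y, Q x y * |v y|)| := by
        rw [abs_of_nonneg hQv]
    _ ≤ ∑' x, w β x * |(∑' y, Q x y * |v y|)| :=
        hsumβ.le_tsum x fun x' _ => mul_nonneg (hw β x').le (abs_nonneg _)
    _ ≤ L / (β - α) ^ q * ∑' y, w α y * |v y| := by simpa only [abs_abs] using hle
    _ ≤ L / (β - α) ^ q * M := by gcongr; exact hv.2

variable [Countable ι] {a₀ T M : ℝ}

theorem IsOvsjannikovMap.hasSum_mul_intervalIntegral (hQ : IsOvsjannikovMap w Q amin amax q L)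
    (hw : ∀ a i, 0 < w a i) (hQpos : ∀ x y, 0 ≤ Q x y) (hL : 0 ≤ L) (ha₀ : amin ≤ a₀)
    (ha₀' : a₀ < amax) {h : ℝ → ι → ℝ} (hc : ∀ i, ContinuousOn (fun t => h t i) (Icc 0 T))
    (hM : ∀ t ∈ Icc 0 T, (Summable fun i => w a₀ i * |h t i|) ∧ ∑' i, w a₀ i * |h t i| ≤ M)
    (x : ι) {t : ℝ} (ht : t ∈ Icc 0 T) :
    HasSum (fun y => Q x y * ∫ s in 0..t, h s y) (∫ s in 0..t, ∑' y, Q x y * h s y) :=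
  hasSum_intervalIntegral_mul_of_tsum_le (hQpos x) ht.1
    (fun i => (hc i).mono (Icc_subset_Icc_right ht.2))
    (fun s hs => hQ.tsum_mul_abs_le hw hQpos hL ha₀ ha₀' le_rfl (hM s ⟨hs.1, hs.2.trans ht.2⟩) x)

theorem IsOvsjannikovMap.eq_zero_of_le_tsum_integral (hQ : IsOvsjannikovMap w Q amin amax q L)
    (hw : ∀ a i, 0 < w a i) (hw_anti : ∀ i, Antitone fun a => w a i) (hq : q < 1) (hL : 0 ≤ L)
    (ha₀ : amin ≤ a₀) (ha₀' : a₀ < amax) {u : ℝ → ι → ℝ} (hu0 : ∀ t i, 0 ≤ u t i)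
    (huc : ∀ i, ContinuousOn (fun t => u t i) (Icc 0 T))
    (huM : ∀ t ∈ Icc 0 T, (Summable fun i => w a₀ i * |u t i|) ∧ ∑' i, w a₀ i * |u t i| ≤ M)
    (hu : ∀ x, ∀ t ∈ Icc 0 T, u t x ≤ ∑' y, Q x y * ∫ s in 0..t, u s y) :
    ∀ x, ∀ t ∈ Icc 0 T, u t x = 0 := by
  have habs : ∀ t i, |u t i| = u t i := fun t i => abs_of_nonneg (hu0 t i)
  set N : ℝ → ℝ → ℝ := fun a t => ∑' i, w a i * u t i
  have hNM : ∀ a, a₀ ≤ a → ∀ t ∈ Icc 0 T,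
      (Summable fun i => w a i * |u t i|) ∧ ∑' i, w a i * |u t i| ≤ M := fun a ha t ht =>
    summable_and_tsum_le_of_le (fun i => mul_nonneg (hw a i).le (abs_nonneg _))
      (fun i => mul_le_mul_of_nonneg_right (hw_anti i ha) (abs_nonneg _)) (huM t ht)
  have hstep : ∀ α β, a₀ ≤ α → α < β → β ≤ amax → ∀ t ∈ Icc 0 T,
      N β t ≤ L / (β - α) ^ q * ∫ s in 0..t, N α s := by
    intro α β hα hαβ hβ t ht
    have hW : HasSum (fun y => w α y * ∫ s in 0..t, u s y) (∫ s in 0..t, N α s) :=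
      hasSum_intervalIntegral_mul_of_tsum_le (fun i => (hw α i).le) ht.1
        (fun i => (huc i).mono (Icc_subset_Icc_right ht.2))
        (fun s hs => hNM α hα s ⟨hs.1, hs.2.trans ht.2⟩)
    have hWabs : ∀ y, |∫ s in 0..t, u s y| = ∫ s in 0..t, u s y := fun y =>
      abs_of_nonneg (intervalIntegral.integral_nonneg ht.1 fun s _ => hu0 s y)
    obtain ⟨-, hsumβ, hle⟩ := hQ α β (ha₀.trans hα) hαβ hβ (fun y => ∫ s in 0..t, u s y)
      (by simpa only [hWabs] using hW.summable)
    calc N β t ≤ ∑' x, w β x * |∑' y, Q x y * ∫ s in 0..t, u s y| := by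
          refine Summable.tsum_le_tsum (fun x => ?_)
            (by simpa only [habs] using (hNM β (hα.trans hαβ.le) t ht).1) hsumβ
          exact mul_le_mul_of_nonneg_left ((hu x t ht).trans (le_abs_self _)) (hw β x).le
      _ ≤ L / (β - α) ^ q * ∑' y, w α y * |∫ s in 0..t, u s y| := hle
      _ = L / (β - α) ^ q * ∫ s in 0..t, N α s := by simp only [hWabs, hW.tsum_eq]
  have hN0 := eq_zero_of_scale_gronwall ha₀' hL hq
    (fun a t => tsum_nonneg fun i => mul_nonneg (hw a i).le (hu0 t i))
    (fun t ht => by simpa only [habs] using (huM t ht).2) hstep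
  intro x t ht
  have hsum : Summable fun i => w amax i * u t i := by
    simpa only [habs] using (hNM amax ha₀'.le t ht).1
  have hx : w amax x * u t x ≤ 0 :=
    (hsum.le_tsum x fun i _ => mul_nonneg (hw amax i).le (hu0 t i)).trans_eq (hN0 t ht)
  exact le_antisymm (nonpos_of_mul_nonpos_right hx (hw amax x)) (hu0 t x)

theorem IsOvsjannikovMap.nonpos_of_le_tsum_integral (hQ : IsOvsjannikovMap w Q amin amax q L)
    (hw : ∀ a i, 0 < w a i) (hw_anti : ∀ i, Antitone fun a => w a i) (hQpos : ∀ x y, 0 ≤ Q x y)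
    (hq : q < 1) (hL : 0 ≤ L) (ha₀ : amin ≤ a₀) (ha₀' : a₀ < amax) {D : ℝ → ι → ℝ}
    (hDc : ∀ i, ContinuousOn (fun t => D t i) (Icc 0 T))
    (hDM : ∀ t ∈ Icc 0 T, (Summable fun i => w a₀ i * |D t i|) ∧ ∑' i, w a₀ i * |D t i| ≤ M)
    (hD : ∀ x, ∀ t ∈ Icc 0 T, D t x ≤ ∑' y, Q x y * ∫ s in 0..t, D s y) :
    ∀ x, ∀ t ∈ Icc 0 T, D t x ≤ 0 := by
  set u : ℝ → ι → ℝ := fun t i => max (D t i) 0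
  have hu0 : ∀ t i, 0 ≤ u t i := fun t i => le_max_right _ _
  have huD : ∀ t i, |u t i| ≤ |D t i| := fun t i => by
    rw [abs_of_nonneg (hu0 t i)]
    exact max_le (le_abs_self _) (abs_nonneg _)
  have huc : ∀ i, ContinuousOn (fun t => u t i) (Icc 0 T) := fun i =>
    (hDc i).sup continuousOn_const
  have huM : ∀ t ∈ Icc 0 T,
      (Summable fun i => w a₀ i * |u t i|) ∧ ∑' i, w a₀ i * |u t i| ≤ M := fun t ht =>
    summable_and_tsum_le_of_le (fun i => mul_nonneg (hw a₀ i).le (abs_nonneg _))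
      (fun i => mul_le_mul_of_nonneg_left (huD t i) (hw a₀ i).le) (hDM t ht)
  have hu : ∀ x, ∀ t ∈ Icc 0 T, u t x ≤ ∑' y, Q x y * ∫ s in 0..t, u s y := by
    intro x t ht
    have hmono : ∀ y, ∫ s in 0..t, D s y ≤ ∫ s in 0..t, u s y := fun y =>
      intervalIntegral.integral_mono_on ht.1
        (((hDc y).mono (Icc_subset_Icc_right ht.2)).intervalIntegrable_of_Icc ht.1)
        (((huc y).mono (Icc_subset_Icc_right ht.2)).intervalIntegrable_of_Icc ht.1)
        fun s _ => le_max_left _ _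
    refine max_le ((hD x t ht).trans ?_) (tsum_nonneg fun y => mul_nonneg (hQpos x y)
      (intervalIntegral.integral_nonneg ht.1 fun s _ => hu0 s y))
    exact (hQ.hasSum_mul_intervalIntegral hw hQpos hL ha₀ ha₀' hDc hDM x ht).summable.tsum_le_tsum
      (fun y => mul_le_mul_of_nonneg_left (hmono y) (hQpos x y))
      (hQ.hasSum_mul_intervalIntegral hw hQpos hL ha₀ ha₀' huc huM x ht).summable
  intro x t ht
  exact (le_max_left _ _).trans
    (hQ.eq_zero_of_le_tsum_integral hw hw_anti hq hL ha₀ ha₀' hu0 huc huM hu x t ht).le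

theorem IsOvsjannikovMap.le_of_le_integral_of_eq_integral
    (hQ : IsOvsjannikovMap w Q amin amax q L) (hw : ∀ a i, 0 < w a i)
    (hw_anti : ∀ i, Antitone fun a => w a i) (hQpos : ∀ x y, 0 ≤ Q x y) (hq : q < 1) (hL : 0 ≤ L)
    (ha₀ : amin ≤ a₀) (ha₀' : a₀ < amax) {Mf Mg : ℝ} {z : ι → ℝ} {f g : ℝ → ι → ℝ}
    (hfc : ∀ i, ContinuousOn (fun t => f t i) (Icc 0 T))
    (hfM : ∀ t ∈ Icc 0 T, (Summable fun i => w a₀ i * |f t i|) ∧ ∑' i, w a₀ i * |f t i| ≤ Mf)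
    (hf : ∀ t ∈ Icc 0 T, ∀ x, f t x = z x + ∫ s in 0..t, ∑' y, Q x y * f s y)
    (hgc : ∀ i, ContinuousOn (fun t => g t i) (Icc 0 T))
    (hgM : ∀ t ∈ Icc 0 T, (Summable fun i => w a₀ i * |g t i|) ∧ ∑' i, w a₀ i * |g t i| ≤ Mg)
    (hg : ∀ x, ∀ t ∈ Icc 0 T, g t x ≤ z x + ∑' y, Q x y * ∫ s in 0..t, g s y) :
    ∀ x, ∀ t ∈ Icc 0 T, g t x ≤ f t x := by
  have hDM : ∀ t ∈ Icc 0 T, (Summable fun i => w a₀ i * |g t i - f t i|) ∧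
      ∑' i, w a₀ i * |g t i - f t i| ≤ Mg + Mf := fun t ht =>
    ⟨summable_mul_abs_sub (fun i => (hw a₀ i).le) (hgM t ht).1 (hfM t ht).1,
      (tsum_mul_abs_sub_le (fun i => (hw a₀ i).le) (hgM t ht).1 (hfM t ht).1).trans
        (add_le_add (hgM t ht).2 (hfM t ht).2)⟩
  have hD : ∀ x, ∀ t ∈ Icc 0 T,
      g t x - f t x ≤ ∑' y, Q x y * ∫ s in 0..t, (g s y - f s y) := by
    intro x t ht
    have hgQ := hQ.hasSum_mul_intervalIntegral hw hQpos hL ha₀ ha₀' hgc hgM x ht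
    have hfQ := hQ.hasSum_mul_intervalIntegral hw hQpos hL ha₀ ha₀' hfc hfM x ht
    have hsplit : ∀ y, Q x y * ∫ s in 0..t, (g s y - f s y) =
        (Q x y * ∫ s in 0..t, g s y) - Q x y * ∫ s in 0..t, f s y := fun y => by
      rw [intervalIntegral.integral_sub
        (((hgc y).mono (Icc_subset_Icc_right ht.2)).intervalIntegrable_of_Icc ht.1)
        (((hfc y).mono (Icc_subset_Icc_right ht.2)).intervalIntegrable_of_Icc ht.1), mul_sub]
    rw [tsum_congr hsplit, hgQ.summable.tsum_sub hfQ.summable, hfQ.tsum_eq]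
    linarith [hg x t ht, hf t ht x]
  intro x t ht
  exact sub_nonpos.1 (hQ.nonpos_of_le_tsum_integral hw hw_anti hQpos hq hL ha₀ ha₀'
    (fun i => (hgc i).sub (hfc i)) hDM hD x t ht)

end Ovsjannikov

theorem Set.Countable.of_inter_isCompact_finite {X : Type*} [TopologicalSpace X]
    [SigmaCompactSpace X] {s : Set X} (hs : ∀ K, IsCompact K → (s ∩ K).Finite) :
    s.Countable := by
  rw [← inter_univ s, ← iUnion_compactCovering, inter_iUnion]
  exact countable_iUnion fun n => (hs _ (isCompact_compactCovering X n)).countable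

theorem statement16_general (d : ℕ) (γ : Set (EuclideanSpace ℝ (Fin d)))
    (hloc : ∀ K : Set (EuclideanSpace ℝ (Fin d)), IsCompact K → (γ ∩ K).Finite)
    (amin amax : ℝ) (hminmax : amin < amax)
    (T : ℝ)
    (z : γ → ℝ)
    (Q : γ → γ → ℝ) (hQpos : ∀ x y : γ, 0 ≤ Q x y)
    (q L : ℝ) (hq1 : q < 1) (hL : 0 < L)
    -- `v ↦ Qv` is an Ovsjannikov map of order `q` and constant `L` on the scale `{l¹_𝔞}`
    (hQovs : ∀ α β : ℝ, amin ≤ α → α < β → β ≤ amax → ∀ v : γ → ℝ,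
      Summable (fun x : γ =>
        Real.exp (-α * ‖(x : EuclideanSpace ℝ (Fin d))‖) * |v x|) →
      (∀ x : γ, Summable (fun y : γ => Q x y * v y)) ∧
      Summable (fun x : γ => Real.exp (-β * ‖(x : EuclideanSpace ℝ (Fin d))‖) *
        |∑' y : γ, Q x y * v y|) ∧
      (∑' x : γ, Real.exp (-β * ‖(x : EuclideanSpace ℝ (Fin d))‖) *
          |∑' y : γ, Q x y * v y|) ≤
        L / (β - α) ^ q *
          ∑' x : γ, Real.exp (-α * ‖(x : EuclideanSpace ℝ (Fin d))‖) * |v x|)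
    -- `f` is the solution of `f(t) = z + ∫₀ᵗ Q(f(s)) ds`, continuous into `l¹_𝔞`
    -- for every `𝔞 ∈ (𝔞₋, 𝔞₊)`
    (f : ℝ → γ → ℝ)
    (hfmem : ∀ a : ℝ, amin < a → a < amax → ∀ t ∈ Icc (0 : ℝ) T,
      Summable (fun x : γ =>
        Real.exp (-a * ‖(x : EuclideanSpace ℝ (Fin d))‖) * |f t x|))
    (hfcont : ∀ a : ℝ, amin < a → a < amax → ∀ t₀ ∈ Icc (0 : ℝ) T,
      Tendsto (fun t => ∑' x : γ,
          Real.exp (-a * ‖(x : EuclideanSpace ℝ (Fin d))‖) * |f t x - f t₀ x|)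
        (nhdsWithin t₀ (Icc (0 : ℝ) T)) (nhds 0))
    (hfeq : ∀ t ∈ Icc (0 : ℝ) T, ∀ x : γ,
      f t x = z x + ∫ s in (0 : ℝ)..t, ∑' y : γ, Q x y * f s y)
    -- `g` is continuous into `l¹_{𝔞₋}` and satisfies the componentwise inequality
    (g : ℝ → γ → ℝ)
    (hgmem : ∀ t ∈ Icc (0 : ℝ) T,
      Summable (fun x : γ =>
        Real.exp (-amin * ‖(x : EuclideanSpace ℝ (Fin d))‖) * |g t x|))
    (hgcont : ∀ t₀ ∈ Icc (0 : ℝ) T,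
      Tendsto (fun t => ∑' x : γ,
          Real.exp (-amin * ‖(x : EuclideanSpace ℝ (Fin d))‖) * |g t x - g t₀ x|)
        (nhdsWithin t₀ (Icc (0 : ℝ) T)) (nhds 0))
    (hgineq : ∀ x : γ, ∀ t ∈ Icc (0 : ℝ) T,
      g t x ≤ z x + ∑' y : γ, Q x y * ∫ s in (0 : ℝ)..t, g s y) :
    ∀ x : γ, ∀ t ∈ Icc (0 : ℝ) T, g t x ≤ f t x := by
  have hγ : Countable γ := (Set.Countable.of_inter_isCompact_finite hloc).to_subtype
  set w : ℝ → γ → ℝ := fun a x => Real.exp (-a * ‖(x : EuclideanSpace ℝ (Fin d))‖)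
  have hw : ∀ a x, 0 < w a x := fun _ _ => Real.exp_pos _
  have hw_anti : ∀ x, Antitone fun a => w a x := fun x a b hab =>
    Real.exp_le_exp.2 (by nlinarith [norm_nonneg (x : EuclideanSpace ℝ (Fin d))])
  have hQ : IsOvsjannikovMap w Q amin amax q L := hQovs
  have ha₀ : amin < (amin + amax) / 2 := by linarith
  have ha₀' : (amin + amax) / 2 < amax := by linarith
  obtain ⟨Mg, hMg⟩ := isCompact_Icc.bddAbove_image
    (continuousOn_tsum_mul_abs_of_tendsto_tsum_mul_abs_sub (fun x => (hw amin x).le) hgmem hgcont)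
  obtain ⟨Mf, hMf⟩ := isCompact_Icc.bddAbove_image
    (continuousOn_tsum_mul_abs_of_tendsto_tsum_mul_abs_sub (fun x => (hw _ x).le)
      (hfmem _ ha₀ ha₀') (hfcont _ ha₀ ha₀'))
  exact hQ.le_of_le_integral_of_eq_integral hw hw_anti hQpos hq1 hL.le ha₀.le ha₀'
    (fun x => continuousOn_apply_of_tendsto_tsum_mul_abs_sub (fun x => (hw _ x).le)
      (hfmem _ ha₀ ha₀') (hfcont _ ha₀ ha₀') (hw _ x))
    (fun t ht => ⟨hfmem _ ha₀ ha₀' t ht, hMf (mem_image_of_mem _ ht)⟩) hfeq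
    (fun x => continuousOn_apply_of_tendsto_tsum_mul_abs_sub (fun x => (hw _ x).le)
      hgmem hgcont (hw _ x))
    (fun t ht => summable_and_tsum_le_of_le (fun x => mul_nonneg (hw _ x).le (abs_nonneg _))
      (fun x => mul_le_mul_of_nonneg_right (hw_anti x ha₀.le) (abs_nonneg _))
      ⟨hgmem t ht, hMg (mem_image_of_mem _ ht)⟩) hgineq

theorem statement16 (d : ℕ) (γ : Set (EuclideanSpace ℝ (Fin d)))
    (hloc : ∀ K : Set (EuclideanSpace ℝ (Fin d)), IsCompact K → (γ ∩ K).Finite)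
    (amin amax : ℝ) (hamin : 0 < amin) (hminmax : amin < amax)
    (T : ℝ) (hT : 0 < T)
    (z : γ → ℝ)
    (hz : Summable (fun x : γ =>
      Real.exp (-amin * ‖(x : EuclideanSpace ℝ (Fin d))‖) * |z x|))
    (Q : γ → γ → ℝ) (hQpos : ∀ x y : γ, 0 ≤ Q x y)
    (q L : ℝ) (hq0 : 0 ≤ q) (hq1 : q < 1) (hL : 0 < L)
    -- `v ↦ Qv` is an Ovsjannikov map of order `q` and constant `L` on the scale `{l¹_𝔞}`
    (hQovs : ∀ α β : ℝ, amin ≤ α → α < β → β ≤ amax → ∀ v : γ → ℝ,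
      Summable (fun x : γ =>
        Real.exp (-α * ‖(x : EuclideanSpace ℝ (Fin d))‖) * |v x|) →
      (∀ x : γ, Summable (fun y : γ => Q x y * v y)) ∧
      Summable (fun x : γ => Real.exp (-β * ‖(x : EuclideanSpace ℝ (Fin d))‖) *
        |∑' y : γ, Q x y * v y|) ∧
      (∑' x : γ, Real.exp (-β * ‖(x : EuclideanSpace ℝ (Fin d))‖) *
          |∑' y : γ, Q x y * v y|) ≤
        L / (β - α) ^ q *
          ∑' x : γ, Real.exp (-α * ‖(x : EuclideanSpace ℝ (Fin d))‖) * |v x|)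
    -- `f` is the solution of `f(t) = z + ∫₀ᵗ Q(f(s)) ds`, continuous into `l¹_𝔞`
    -- for every `𝔞 ∈ (𝔞₋, 𝔞₊)`
    (f : ℝ → γ → ℝ)
    (hfmem : ∀ a : ℝ, amin < a → a < amax → ∀ t ∈ Icc (0 : ℝ) T,
      Summable (fun x : γ =>
        Real.exp (-a * ‖(x : EuclideanSpace ℝ (Fin d))‖) * |f t x|))
    (hfcont : ∀ a : ℝ, amin < a → a < amax → ∀ t₀ ∈ Icc (0 : ℝ) T,
      Tendsto (fun t => ∑' x : γ,
          Real.exp (-a * ‖(x : EuclideanSpace ℝ (Fin d))‖) * |f t x - f t₀ x|)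
        (nhdsWithin t₀ (Icc (0 : ℝ) T)) (nhds 0))
    (hfeq : ∀ t ∈ Icc (0 : ℝ) T, ∀ x : γ,
      f t x = z x + ∫ s in (0 : ℝ)..t, ∑' y : γ, Q x y * f s y)
    -- `g` is continuous into `l¹_{𝔞₋}` and satisfies the componentwise inequality
    (g : ℝ → γ → ℝ)
    (hgmem : ∀ t ∈ Icc (0 : ℝ) T,
      Summable (fun x : γ =>
        Real.exp (-amin * ‖(x : EuclideanSpace ℝ (Fin d))‖) * |g t x|))
    (hgcont : ∀ t₀ ∈ Icc (0 : ℝ) T,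
      Tendsto (fun t => ∑' x : γ,
          Real.exp (-amin * ‖(x : EuclideanSpace ℝ (Fin d))‖) * |g t x - g t₀ x|)
        (nhdsWithin t₀ (Icc (0 : ℝ) T)) (nhds 0))
    (hgineq : ∀ x : γ, ∀ t ∈ Icc (0 : ℝ) T,
      g t x ≤ z x + ∑' y : γ, Q x y * ∫ s in (0 : ℝ)..t, g s y) :
    ∀ x : γ, ∀ t ∈ Icc (0 : ℝ) T, g t x ≤ f t x :=
  statement16_general d γ hloc amin amax hminmax T z Q hQpos q L hq1 hL hQovs f hfmem hfcont hfeq g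
    hgmem hgcont hgineq
end
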